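/- arXiv:2306.08831 — 7 statements merged into one kernel-verified Lean document; each statement's English description precedes it below -/
import Mathlib

section
/- For all nonnegative integers k and m, the sum over j of (-1)^j * C(k,j) * β_{m+j} plus the sum over j of (-1)^j * C(m,j) * β_{k+j} equals -k!·m!/(k+m+1)!, where β_n := ζ(-n) = (-1)^n B_{n+1}/(n+1) and each sum runs over 0 ≤ j ≤ k and 0 ≤ j ≤ m respectively. -/
open Finset

/-- β_m := ζ(-m) = (-1)^m B_{m+1}/(m+1), with the convention B₁ = -1/2. -/
noncomputable def beta (m : ℕ) : ℚ := (-1 : ℚ)^m * bernoulli (m+1) / (m+1)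

/-!
Let `L` be the linear functional `X ^ n ↦ B_n` on `ℚ[X]` and `Q_{k,m}(x) = ∫₀ˣ t^m (1-t)^k dt`.
Expanding `(1-t)^k` shows that the first sum is `-L(Q_{k,m}(-X))`. Because the Bernoulli
polynomials satisfy `B_n(1) = (-1)^n B_n`, `L(p(X+1)) = L(p(-X))` for every polynomial `p`.
The substitution `t ↦ 1 - t` gives `Q_{m,k}(x) = B - Q_{k,m}(1-x)`, where
`B = Q_{k,m}(1) = k! m!/(k+m+1)!` by integration by parts, so the second sum is
`-B + L(Q_{k,m}(X+1)) = -B + L(Q_{k,m}(-X))`.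
-/

open Polynomial hiding bernoulli sum_bernoulli

noncomputable def umbralBernoulli : ℚ[X] →ₗ[ℚ] ℚ :=
  lsum fun n => bernoulli n • LinearMap.id

@[simp]
lemma umbralBernoulli_monomial (n : ℕ) (c : ℚ) :
    umbralBernoulli (monomial n c) = c * bernoulli n := by
  simp [umbralBernoulli, mul_comm]

@[simp]
lemma umbralBernoulli_C (c : ℚ) : umbralBernoulli (C c) = c := by
  simpa using umbralBernoulli_monomial 0 c

lemma umbralBernoulli_neg_X_pow (n : ℕ) :
    umbralBernoulli ((-X) ^ n) = (-1) ^ n * bernoulli n := by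
  rw [neg_pow, ← C_1, ← C_neg, ← C_pow, C_mul_X_pow_eq_monomial, umbralBernoulli_monomial]

lemma umbralBernoulli_X_add_one_pow (n : ℕ) :
    umbralBernoulli ((X + 1) ^ n) = bernoulli' n := by
  have hsum :
      umbralBernoulli ((X + 1) ^ n) = ∑ i ∈ range (n + 1), (n.choose i : ℚ) * bernoulli i := by
    simp [add_pow, map_sum, ← C_eq_natCast, C_mul_X_pow_eq_monomial, -map_natCast]
  rw [hsum, sum_range_succ, sum_bernoulli, Nat.choose_self, Nat.cast_one, one_mul]
  rcases eq_or_ne n 1 with rfl | hn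
  · norm_num [bernoulli'_one]
  · rw [if_neg hn, zero_add, bernoulli_eq_bernoulli'_of_ne_one hn]

lemma umbralBernoulli_comp_X_add_one (p : ℚ[X]) :
    umbralBernoulli (p.comp (X + 1)) = umbralBernoulli (p.comp (-X)) := by
  induction p using Polynomial.induction_on' with
  | add p q hp hq => rw [add_comp, add_comp, map_add, map_add, hp, hq]
  | monomial n c =>
    rw [monomial_comp, monomial_comp, ← smul_eq_C_mul, ← smul_eq_C_mul, map_smul, map_smul,
      umbralBernoulli_X_add_one_pow, umbralBernoulli_neg_X_pow, bernoulli'_eq_bernoulli]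

lemma Polynomial.eq_of_derivative_eq {R : Type*} [Ring R] [IsAddTorsionFree R] {p q : R[X]}
    (hd : derivative p = derivative q) (h0 : p.eval 0 = q.eval 0) : p = q := by
  have hc := eq_C_of_derivative_eq_zero (p := p - q) (by rw [map_sub, hd, sub_self])
  rw [coeff_zero_eq_eval_zero, eval_sub, h0, sub_self, C_0, sub_eq_zero] at hc
  exact hc

noncomputable def incompleteBeta (k m : ℕ) : ℚ[X] :=
  ∑ j ∈ range (k + 1), C ((-1 : ℚ) ^ j * k.choose j / (m + j + 1)) * X ^ (m + j + 1)

@[simp]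
lemma incompleteBeta_eval_zero (k m : ℕ) : (incompleteBeta k m).eval 0 = 0 := by
  simp [incompleteBeta, eval_finsetSum]

lemma derivative_incompleteBeta (k m : ℕ) :
    derivative (incompleteBeta k m) = X ^ m * (1 - X) ^ k := by
  rw [sub_eq_neg_add, add_pow, incompleteBeta, map_sum, mul_sum]
  refine sum_congr rfl fun j _ => ?_
  have hcoeff :
      (-1 : ℚ) ^ j * k.choose j / (m + j + 1) * (m + j + 1 : ℕ) = (-1) ^ j * k.choose j := by
    push_cast
    field_simp
  rw [derivative_C_mul_X_pow, hcoeff, Nat.add_sub_cancel, map_mul, map_pow, map_neg, map_one,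
    C_eq_natCast, neg_pow, one_pow, mul_one, pow_add]
  ring

lemma incompleteBeta_eq_of_derivative {k m : ℕ} {p : ℚ[X]}
    (hd : derivative p = X ^ m * (1 - X) ^ k) (h0 : p.eval 0 = 0) : p = incompleteBeta k m :=
  eq_of_derivative_eq (hd.trans (derivative_incompleteBeta k m).symm)
    (h0.trans (incompleteBeta_eval_zero k m).symm)

lemma incompleteBeta_symm (k m : ℕ) :
    incompleteBeta m k = C ((incompleteBeta k m).eval 1) - (incompleteBeta k m).comp (1 - X) := by
  symm
  apply incompleteBeta_eq_of_derivative
  · rw [derivative_sub, derivative_C, derivative_comp_one_sub_X, derivative_incompleteBeta]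
    simp only [mul_comp, pow_comp, X_comp, sub_comp, one_comp]
    ring
  · simp

lemma incompleteBeta_integration_by_parts (k m : ℕ) :
    (m + 1 : ℚ) • incompleteBeta (k + 1) m - (k + 1 : ℚ) • incompleteBeta k (m + 1)
      = X ^ (m + 1) * (1 - X) ^ (k + 1) := by
  apply eq_of_derivative_eq
  · rw [map_sub, map_smul, map_smul, derivative_incompleteBeta, derivative_incompleteBeta,
      derivative_mul, derivative_X_pow, derivative_pow, derivative_sub, derivative_one,
      derivative_X, smul_eq_C_mul, smul_eq_C_mul]
    push_cast
    ring
  · simp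

lemma incompleteBeta_eval_one_eq_factorial (k m : ℕ) :
    (incompleteBeta k m).eval 1 = (k.factorial * m.factorial / (k + m + 1).factorial : ℚ) := by
  induction k generalizing m with
  | zero =>
    have hm : (m + 1 : ℚ) ≠ 0 := by positivity
    simp [incompleteBeta, Nat.factorial_succ]
    field_simp
  | succ k ih =>
    have h := congrArg (eval 1) (incompleteBeta_integration_by_parts k m)
    rw [eval_sub, eval_smul, eval_smul, ih, eval_mul, eval_pow, eval_pow, eval_sub, eval_one,
      eval_X, sub_self, zero_pow k.succ_ne_zero, mul_zero, smul_eq_mul, smul_eq_mul,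
      sub_eq_zero] at h
    rw [← mul_right_inj' (show (m + 1 : ℚ) ≠ 0 by positivity), h,
      show k + 1 + m + 1 = k + (m + 1) + 1 by ring, Nat.factorial_succ k, Nat.factorial_succ m]
    push_cast
    field_simp

lemma sum_choose_mul_beta_eq (k m : ℕ) :
    ∑ j ∈ range (k + 1), (-1 : ℚ) ^ j * k.choose j * beta (m + j)
      = -umbralBernoulli ((incompleteBeta k m).comp (-X)) := by
  rw [incompleteBeta, Polynomial.sum_comp, map_sum, ← sum_neg_distrib]
  refine sum_congr rfl fun j _ => ?_
  rw [mul_comp, C_comp, pow_comp, X_comp, ← smul_eq_C_mul, map_smul, umbralBernoulli_neg_X_pow,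
    smul_eq_mul, beta]
  push_cast
  ring

theorem saalschutz_reciprocity (k m : ℕ) :
    (∑ j ∈ range (k+1), (-1 : ℚ)^j * (k.choose j) * beta (m+j))
      + (∑ j ∈ range (m+1), (-1 : ℚ)^j * (m.choose j) * beta (k+j))
      = -((k.factorial : ℚ) * (m.factorial) / ((k+m+1).factorial)) := by
  have hsymm : (incompleteBeta m k).comp (-X)
      = C ((incompleteBeta k m).eval 1) - (incompleteBeta k m).comp (X + 1) := by
    rw [incompleteBeta_symm k m, sub_comp, C_comp, comp_assoc, sub_comp, one_comp, X_comp,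
      sub_neg_eq_add, add_comm]
  rw [sum_choose_mul_beta_eq, sum_choose_mul_beta_eq, hsymm, map_sub, umbralBernoulli_C,
    umbralBernoulli_comp_X_add_one, incompleteBeta_eval_one_eq_factorial]
  ring
end

section
/- For all nonnegative integers k and m, Σ_{j=0}^{k} (-1)^j C(k,j) β_{m+j} β_{k-j} + Σ_{j=0}^{m} (-1)^j C(m,j) β_{k+j} β_{m-j} = β_k β_m − ( k!·m!/(k+m+1)! + (-1)^k/(k+1) + (-1)^m/(m+1) ) β_{k+m+1}. -/
/-!
Let `f(t) = ∑ βₙ tⁿ / n!`. Since `βₙ = -B'ₙ₊₁ / (n + 1)`, the generating function of `bernoulli'`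
gives `f(t) = 1/t - eᵗ/(eᵗ - 1)`. Up to the factor `k! m!`, both sides of the reciprocity law are
the coefficients of `xᵏ yᵐ` in the terms of
`f(y - x) f(x) + f(x - y) f(y) - f(x) f(y) + (f(x) - f(y))/(x - y) + (f(y) - f(y - x))/x + (f(x) - f(x - y))/y`.
After substituting `f(t) = 1/t - eᵗ/(eᵗ - 1)` and `e^(y-x) = e^y / e^x`, this becomes a rational
function of `x, y, eˣ, eʸ` that is identically zero.
-/

open Finset

open PowerSeries
open scoped Nat

namespace Polynomial

variable {R : Type*} [CommRing R]

theorem coeff_X_sub_one_pow (n k : ℕ) :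
    ((X - 1 : R[X]) ^ n).coeff k = (-1) ^ (n - k) * n.choose k := by
  rw [sub_eq_add_neg, ← C_1, ← C_neg, coeff_X_add_C_pow]

theorem coeff_one_sub_X_pow (n k : ℕ) :
    ((1 - X : R[X]) ^ n).coeff k = (-1) ^ k * n.choose k := by
  rw [← neg_sub, neg_pow, ← C_1, ← C_neg, ← C_pow, coeff_C_mul, C_1, coeff_X_sub_one_pow]
  rcases le_or_gt k n with h | h
  · obtain ⟨j, rfl⟩ := exists_add_of_le h
    rw [Nat.add_sub_cancel_left, pow_add, mul_assoc, ← mul_assoc ((-1) ^ j), ← mul_pow]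
    simp
  · simp [Nat.choose_eq_zero_of_lt h]

end Polynomial

namespace PowerSeries

theorem coeff_zero_C_mul_X_mul {R : Type*} [CommSemiring R] (c : R) (G : R⟦X⟧) :
    coeff 0 (C c * X * G) = 0 := by
  rw [mul_comm (C c), mul_assoc, coeff_zero_X_mul]

theorem coeff_succ_C_mul_X_mul {R : Type*} [CommSemiring R] (c : R) (G : R⟦X⟧) (n : ℕ) :
    coeff (n + 1) (C c * X * G) = c * coeff n G := by
  rw [mul_comm (C c), mul_assoc, coeff_succ_X_mul, coeff_C_mul]

theorem C_mul_X_ne_zero {R : Type*} [CommRing R] [IsDomain R] {c : R} (hc : c ≠ 0) :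
    C c * X ≠ (0 : R⟦X⟧) :=
  mul_ne_zero (fun h => hc (by simpa using congrArg (coeff 0) h)) X_ne_zero

theorem rescale_exp_ne_one {A : Type*} [CommRing A] [Algebra ℚ A] {c : A} (hc : c ≠ 0) :
    rescale c (exp A) ≠ 1 := fun h =>
  hc (by simpa [coeff_rescale, coeff_one] using congrArg (coeff 1) h)

end PowerSeries

theorem eq_inv_sub_div_of_mul_mul_sub_one {K : Type*} [Field K] {ℓ e f : K} (hℓ : ℓ ≠ 0)
    (he : e ≠ 1) (h : ℓ * f * (e - 1) = e - 1 - ℓ * e) : f = ℓ⁻¹ - e / (e - 1) := by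
  have he' : e - 1 ≠ 0 := sub_ne_zero.mpr he
  field_simp
  linear_combination h

namespace NielsenReciprocity

theorem beta_eq_neg_bernoulli' (n : ℕ) : beta n = -bernoulli' (n + 1) / (n + 1) := by
  rw [beta, bernoulli'_eq_bernoulli, pow_succ]
  ring

section Series

variable (A : Type*) [CommRing A] [Algebra ℚ A]

noncomputable def betaSeries : A⟦X⟧ := mk fun n => algebraMap ℚ A (beta n / n !)

theorem X_mul_betaSeries : X * betaSeries A = 1 - bernoulli'PowerSeries A := by
  ext (_ | n)
  · simp [bernoulli'PowerSeries]
  · rw [coeff_succ_X_mul, betaSeries, bernoulli'PowerSeries, map_sub, coeff_one, coeff_mk,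
      coeff_mk, beta_eq_neg_bernoulli', Nat.factorial_succ]
    push_cast
    rw [zero_sub, ← map_neg]
    congr 1
    field_simp

theorem rescale_X_mul_betaSeries_mul_exp_sub_one (c : A) :
    C c * X * rescale c (betaSeries A) * (rescale c (exp A) - 1)
      = rescale c (exp A) - 1 - C c * X * rescale c (exp A) := by
  have h : X * betaSeries A * (exp A - 1) = exp A - 1 - X * exp A := by
    rw [X_mul_betaSeries, sub_mul, one_mul, bernoulli'PowerSeries_mul_exp_sub_one]
  simpa [rescale_X] using congrArg (rescale c) h

end Series

theorem nielsen_field_identity {K : Type*} [Field K] {x y ex ey eu ev fx fy fu fv d p q : K}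
    (hx : x ≠ 0) (hy : y ≠ 0) (hxy : x ≠ y) (hex : ex ≠ 1) (hey : ey ≠ 1) (heu : eu ≠ 1)
    (hux : eu * ex = ey) (huv : eu * ev = 1)
    (hfx : x * fx * (ex - 1) = ex - 1 - x * ex) (hfy : y * fy * (ey - 1) = ey - 1 - y * ey)
    (hfu : (y - x) * fu * (eu - 1) = eu - 1 - (y - x) * eu)
    (hfv : (x - y) * fv * (ev - 1) = ev - 1 - (x - y) * ev)
    (hd : (x - y) * d = fx - fy) (hp : x * p = fy - fu) (hq : y * q = fx - fv) :
    fu * fx + fv * fy - fx * fy + d + p + q = 0 := by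
  have hxy' : x - y ≠ 0 := sub_ne_zero.mpr hxy
  have hyx' : y - x ≠ 0 := sub_ne_zero.mpr hxy.symm
  obtain rfl := eq_div_of_mul_eq hxy' ((mul_comm _ _).trans hd)
  obtain rfl := eq_div_of_mul_eq hx ((mul_comm _ _).trans hp)
  obtain rfl := eq_div_of_mul_eq hy ((mul_comm _ _).trans hq)
  obtain rfl := eq_inv_sub_div_of_mul_mul_sub_one hx hex hfx
  obtain rfl := eq_inv_sub_div_of_mul_mul_sub_one hy hey hfy
  obtain rfl := eq_inv_sub_div_of_mul_mul_sub_one hyx' heu hfu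
  obtain rfl : ev = eu⁻¹ := eq_inv_of_mul_eq_one_right huv
  obtain rfl := eq_inv_sub_div_of_mul_mul_sub_one hxy' (inv_ne_one.mpr heu) hfv
  obtain rfl := hux
  have hu0 : eu ≠ 0 := left_ne_zero_of_mul_eq_one huv
  field_simp
  ring

/-- The identity of the header with `x = a t` and `y = b t`. -/
theorem nielsen_series_identity {A : Type*} [CommRing A] [IsDomain A] [Algebra ℚ A] {a b : A}
    (ha : a ≠ 0) (hb : b ≠ 0) (hab : a ≠ b) {d p q : A⟦X⟧}
    (hd : C (a - b) * X * d = rescale a (betaSeries A) - rescale b (betaSeries A))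
    (hp : C a * X * p = rescale b (betaSeries A) - rescale (b - a) (betaSeries A))
    (hq : C b * X * q = rescale a (betaSeries A) - rescale (a - b) (betaSeries A)) :
    rescale (b - a) (betaSeries A) * rescale a (betaSeries A)
      + rescale (a - b) (betaSeries A) * rescale b (betaSeries A)
      - rescale a (betaSeries A) * rescale b (betaSeries A) + d + p + q = 0 := by
  let ι := algebraMap A⟦X⟧ (FractionRing A⟦X⟧)
  have hι : Function.Injective ι := IsFractionRing.injective _ _
  have hℓ (c c' : A) : ι (C (c - c') * X) = ι (C c * X) - ι (C c' * X) := by simp [sub_mul]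
  have rel (c : A) : ι (C c * X) * ι (rescale c (betaSeries A)) * (ι (rescale c (exp A)) - 1)
      = ι (rescale c (exp A)) - 1 - ι (C c * X) * ι (rescale c (exp A)) := by
    simpa using congrArg ι (rescale_X_mul_betaSeries_mul_exp_sub_one A c)
  have ne_zero {c : A} (hc : c ≠ 0) : ι (C c * X) ≠ 0 :=
    (map_ne_zero_iff ι hι).mpr (C_mul_X_ne_zero hc)
  have ne_one {c : A} (hc : c ≠ 0) : ι (rescale c (exp A)) ≠ 1 :=
    map_one ι ▸ hι.ne (rescale_exp_ne_one hc)
  have exp_mul (c c' : A) :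
      ι (rescale c (exp A)) * ι (rescale c' (exp A)) = ι (rescale (c + c') (exp A)) := by
    rw [← map_mul, exp_mul_exp_eq_exp_add]
  have hxy : ι (C a * X) ≠ ι (C b * X) :=
    sub_ne_zero.mp (hℓ a b ▸ ne_zero (sub_ne_zero.mpr hab))
  have hux : ι (rescale (b - a) (exp A)) * ι (rescale a (exp A)) = ι (rescale b (exp A)) := by
    rw [exp_mul, sub_add_cancel]
  have huv : ι (rescale (b - a) (exp A)) * ι (rescale (a - b) (exp A)) = 1 := by
    rw [exp_mul, sub_add_sub_cancel', sub_self, rescale_zero]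
    simp
  have hu := hℓ b a ▸ rel (b - a)
  have hv := hℓ a b ▸ rel (a - b)
  have hd' := congrArg ι hd
  have hp' := congrArg ι hp
  have hq' := congrArg ι hq
  rw [map_mul, hℓ, map_sub] at hd'
  rw [map_mul, map_sub] at hp' hq'
  apply hι
  simp only [map_add, map_sub, map_mul, map_zero]
  exact nielsen_field_identity (ne_zero ha) (ne_zero hb) hxy (ne_one ha) (ne_one hb)
    (ne_one (sub_ne_zero.mpr hab.symm)) hux huv (rel a) (rel b) hu hv hd' hp' hq'

/-- A series `G` in `ℚ[x]⟦t⟧` encodes the series `H` in `x, y` with `G(x, t) = H(x t, t)`, so the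
coefficient of `xᵏ yᵐ` in `H` is that of `xᵏ tᵏ⁺ᵐ` in `G`. -/
noncomputable def bicoeff (k m : ℕ) : (Polynomial ℚ)⟦X⟧ →+ ℚ :=
  (Polynomial.lcoeff ℚ k).toAddMonoidHom.comp (coeff (k + m)).toAddMonoidHom

theorem bicoeff_apply (k m : ℕ) (G : (Polynomial ℚ)⟦X⟧) :
    bicoeff k m G = (coeff (k + m) G).coeff k := rfl

theorem coeff_rescale_betaSeries (c : Polynomial ℚ) (n : ℕ) :
    coeff n (rescale c (betaSeries (Polynomial ℚ))) = Polynomial.C (beta n / n !) * c ^ n := by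
  rw [coeff_rescale, betaSeries, coeff_mk, Polynomial.algebraMap_eq, mul_comm]

theorem coeff_rescale_betaSeries_mul (a b : Polynomial ℚ) (N : ℕ) :
    coeff N (rescale a (betaSeries (Polynomial ℚ)) * rescale b (betaSeries (Polynomial ℚ)))
      = ∑ i ∈ range (N + 1), Polynomial.C (beta i / i ! * (beta (N - i) / (N - i)!))
          * (a ^ i * b ^ (N - i)) := by
  rw [coeff_mul, Finset.Nat.sum_antidiagonal_eq_sum_range_succ_mk]
  refine sum_congr rfl fun i _ => ?_
  simp only [coeff_rescale_betaSeries, map_mul]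
  ring

theorem factorial_mul_factorial_mul_choose_div {k m j : ℕ} (hj : j ≤ m) :
    (k ! * m ! : ℚ) * ((k + j).choose k / ((k + j)! * (m - j)!)) = m.choose j := by
  rw [Nat.cast_choose ℚ (Nat.le_add_right k j), Nat.cast_choose ℚ hj, Nat.add_sub_cancel_left]
  field_simp

theorem bicoeff_rescale_X_mul_rescale_one (k m : ℕ) :
    (k ! * m ! : ℚ) * bicoeff k m (rescale Polynomial.X (betaSeries (Polynomial ℚ))
      * rescale 1 (betaSeries (Polynomial ℚ))) = beta k * beta m := by
  rw [bicoeff_apply, coeff_rescale_betaSeries_mul, Polynomial.finsetSum_coeff]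
  simp only [one_pow, mul_one, Polynomial.coeff_C_mul, Polynomial.coeff_X_pow]
  rw [sum_eq_single_of_mem k (by simp) (fun i _ hi => by simp [Ne.symm hi]), if_pos rfl,
    Nat.add_sub_cancel_left]
  field_simp

theorem bicoeff_rescale_X_sub_one_mul_rescale_one (k m : ℕ) :
    (k ! * m ! : ℚ) * bicoeff k m (rescale (Polynomial.X - 1) (betaSeries (Polynomial ℚ))
      * rescale 1 (betaSeries (Polynomial ℚ)))
      = ∑ j ∈ range (m + 1), (-1 : ℚ) ^ j * m.choose j * beta (k + j) * beta (m - j) := by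
  rw [bicoeff_apply, coeff_rescale_betaSeries_mul, Polynomial.finsetSum_coeff, add_assoc,
    sum_range_add]
  simp only [one_pow, mul_one, Polynomial.coeff_C_mul, Polynomial.coeff_X_sub_one_pow]
  rw [sum_eq_zero fun i hi => by simp [Nat.choose_eq_zero_of_lt (mem_range.mp hi)], zero_add,
    mul_sum]
  refine sum_congr rfl fun j hj => ?_
  have hj : j ≤ m := Nat.lt_succ_iff.mp (mem_range.mp hj)
  rw [Nat.add_sub_add_left, Nat.add_sub_cancel_left, ← factorial_mul_factorial_mul_choose_div hj]
  ring

theorem bicoeff_rescale_one_sub_X_mul_rescale_X (k m : ℕ) :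
    (k ! * m ! : ℚ) * bicoeff k m (rescale (1 - Polynomial.X) (betaSeries (Polynomial ℚ))
      * rescale Polynomial.X (betaSeries (Polynomial ℚ)))
      = ∑ j ∈ range (k + 1), (-1 : ℚ) ^ j * k.choose j * beta (m + j) * beta (k - j) := by
  rw [bicoeff_apply, coeff_rescale_betaSeries_mul, Polynomial.finsetSum_coeff, add_comm k m,
    add_assoc, sum_range_add]
  simp only [Polynomial.coeff_C_mul, Polynomial.coeff_mul_X_pow']
  rw [sum_eq_zero fun i hi => by rw [if_neg (by have := mem_range.mp hi; omega), mul_zero],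
    zero_add, mul_sum]
  refine sum_congr rfl fun j hj => ?_
  have hj : j ≤ k := Nat.lt_succ_iff.mp (mem_range.mp hj)
  rw [Nat.add_sub_add_left, if_pos (Nat.sub_le k j), Nat.sub_sub_self hj,
    Polynomial.coeff_one_sub_X_pow, ← Nat.choose_symm_add, mul_comm (k ! : ℚ),
    ← factorial_mul_factorial_mul_choose_div hj]
  ring

noncomputable def divDiffXY : (Polynomial ℚ)⟦X⟧ :=
  mk fun n => Polynomial.C (beta (n + 1) / (n + 1)!) * ∑ i ∈ range (n + 1), Polynomial.X ^ i

noncomputable def divDiffX : (Polynomial ℚ)⟦X⟧ :=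
  mk fun n => Polynomial.C (beta (n + 1) / (n + 1)!) *
    Polynomial.divX (1 - (1 - Polynomial.X : Polynomial ℚ) ^ (n + 1))

noncomputable def divDiffY : (Polynomial ℚ)⟦X⟧ :=
  mk fun n => Polynomial.C (beta (n + 1) / (n + 1)!) *
    (Polynomial.X ^ (n + 1) - (Polynomial.X - 1) ^ (n + 1))

theorem C_mul_X_mul_divDiffXY : C (Polynomial.X - 1) * X * divDiffXY
    = rescale Polynomial.X (betaSeries (Polynomial ℚ)) - rescale 1 (betaSeries (Polynomial ℚ)) := by
  refine ext fun n => ?_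
  rcases n with _ | n
  · rw [coeff_zero_C_mul_X_mul, map_sub, coeff_rescale_betaSeries, coeff_rescale_betaSeries]
    simp
  · rw [coeff_succ_C_mul_X_mul, divDiffXY, coeff_mk, map_sub, coeff_rescale_betaSeries,
      coeff_rescale_betaSeries, one_pow]
    linear_combination
      Polynomial.C (beta (n + 1) / (n + 1)!) * geom_sum_mul (Polynomial.X : Polynomial ℚ) (n + 1)

theorem C_mul_X_mul_divDiffX : C Polynomial.X * X * divDiffX
    = rescale 1 (betaSeries (Polynomial ℚ))
      - rescale (1 - Polynomial.X) (betaSeries (Polynomial ℚ)) := by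
  refine ext fun n => ?_
  rcases n with _ | n
  · rw [coeff_zero_C_mul_X_mul, map_sub, coeff_rescale_betaSeries, coeff_rescale_betaSeries]
    simp
  · have h := Polynomial.X_mul_divX_add (1 - (1 - Polynomial.X : Polynomial ℚ) ^ (n + 1))
    rw [Polynomial.coeff_zero_eq_eval_zero] at h
    simp only [Polynomial.eval_sub, Polynomial.eval_one, Polynomial.eval_pow, Polynomial.eval_X,
      sub_zero, one_pow, sub_self, map_zero, add_zero] at h
    rw [coeff_succ_C_mul_X_mul, divDiffX, coeff_mk, map_sub, coeff_rescale_betaSeries,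
      coeff_rescale_betaSeries, one_pow]
    linear_combination Polynomial.C (beta (n + 1) / (n + 1)!) * h

theorem C_mul_X_mul_divDiffY : C 1 * X * divDiffY
    = rescale Polynomial.X (betaSeries (Polynomial ℚ))
      - rescale (Polynomial.X - 1) (betaSeries (Polynomial ℚ)) := by
  refine ext fun n => ?_
  rcases n with _ | n
  · rw [coeff_zero_C_mul_X_mul, map_sub, coeff_rescale_betaSeries, coeff_rescale_betaSeries]
    simp
  · rw [coeff_succ_C_mul_X_mul, divDiffY, coeff_mk, map_sub, coeff_rescale_betaSeries,
      coeff_rescale_betaSeries]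
    ring

theorem bicoeff_divDiffXY (k m : ℕ) :
    (k ! * m ! : ℚ) * bicoeff k m divDiffXY = k ! * m ! / (k + m + 1)! * beta (k + m + 1) := by
  rw [bicoeff_apply, divDiffXY, coeff_mk, Polynomial.coeff_C_mul, Polynomial.finsetSum_coeff]
  simp only [Polynomial.coeff_X_pow]
  rw [sum_ite_eq, if_pos (mem_range.mpr (by omega))]
  ring

theorem bicoeff_divDiffX (k m : ℕ) :
    (k ! * m ! : ℚ) * bicoeff k m divDiffX = (-1) ^ k / (k + 1) * beta (k + m + 1) := by
  rw [bicoeff_apply, divDiffX, coeff_mk, Polynomial.coeff_C_mul, Polynomial.coeff_divX,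
    Polynomial.coeff_sub, Polynomial.coeff_one, if_neg (Nat.succ_ne_zero k),
    Polynomial.coeff_one_sub_X_pow, Nat.cast_choose ℚ (by omega : k + 1 ≤ k + m + 1),
    show k + m + 1 - (k + 1) = m by omega, Nat.factorial_succ k]
  push_cast
  field_simp
  ring

theorem bicoeff_divDiffY (k m : ℕ) :
    (k ! * m ! : ℚ) * bicoeff k m divDiffY = (-1) ^ m / (m + 1) * beta (k + m + 1) := by
  rw [bicoeff_apply, divDiffY, coeff_mk, Polynomial.coeff_C_mul, Polynomial.coeff_sub,
    Polynomial.coeff_X_pow, if_neg (by omega), Polynomial.coeff_X_sub_one_pow,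
    Nat.cast_choose ℚ (by omega : k ≤ k + m + 1), show k + m + 1 - k = m + 1 by omega,
    Nat.factorial_succ m]
  push_cast
  field_simp
  ring

end NielsenReciprocity

open NielsenReciprocity

theorem nielsen_reciprocity (k m : ℕ) :
    (∑ j ∈ range (k+1), (-1 : ℚ)^j * (k.choose j) * beta (m+j) * beta (k-j))
      + (∑ j ∈ range (m+1), (-1 : ℚ)^j * (m.choose j) * beta (k+j) * beta (m-j))
      = beta k * beta m
        - ((k.factorial : ℚ) * (m.factorial) / ((k+m+1).factorial)
            + (-1 : ℚ)^k / (k+1) + (-1 : ℚ)^m / (m+1)) * beta (k+m+1) := by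
  have h := congrArg (fun G => (k ! * m ! : ℚ) * bicoeff k m G)
    (nielsen_series_identity Polynomial.X_ne_zero one_ne_zero (Polynomial.X_ne_C 1)
      C_mul_X_mul_divDiffXY C_mul_X_mul_divDiffX C_mul_X_mul_divDiffY)
  simp only [map_add, map_sub, map_zero, mul_zero, mul_add, mul_sub,
    bicoeff_rescale_one_sub_X_mul_rescale_X, bicoeff_rescale_X_sub_one_mul_rescale_one,
    bicoeff_rescale_X_mul_rescale_one, bicoeff_divDiffXY, bicoeff_divDiffX, bicoeff_divDiffY] at h
  linear_combination h
end

section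
/- Let f = Σ_{r=0}^{2n−2} c_r Q_r where Q_r(x₁,x₂) := [z^r]((z−x₁)(z−x₂))^{n−1} and r* := 2n−2−r. Then f + f|S = 0 (for the action (f|S)(x₁,x₂) = (x₁x₂)^{n−1} f(−1/x₁,−1/x₂)) if and only if c_{r*} + (−1)^r c_r = 0 for all 0 ≤ r ≤ 2n−2. -/
open Finset

/-- Q_r(x₁,x₂) := [z^r] ((z-x₁)(z-x₂))^{n-1}. -/
noncomputable def Q (n r : ℕ) (x₁ x₂ : ℚ) : ℚ :=
  (((Polynomial.X - Polynomial.C x₁) * (Polynomial.X - Polynomial.C x₂))^(n-1)).coeff r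

open Polynomial in
lemma coeff_comp_neg_X (p : ℚ[X]) (s : ℕ) :
    (p.comp (-X)).coeff s = (-1)^s * p.coeff s := by
  induction p using Polynomial.induction_on' with
  | add p q hp hq => simp [add_comp, hp, hq, mul_add]
  | monomial n a =>
    have h0 : (-X : ℚ[X])^n = C ((-1)^n) * X^n := by
      rw [← neg_one_mul, mul_pow, ← C_1, ← C_neg, ← C_pow]
    rw [monomial_comp, h0, ← mul_assoc, ← C_mul, coeff_C_mul, coeff_X_pow, coeff_monomial]
    by_cases h : n = s
    · subst h; simp [mul_comm]
    · simp [h, Ne.symm h]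

open Polynomial in
lemma reflect_X_add_C' (a : ℚ) : Polynomial.reflect 1 (X + C a) = 1 + C a * X := by
  rw [reflect_add, reflect_one_X, reflect_C]
  ring

open Polynomial in
lemma reflect_key (a b : ℚ) (m : ℕ) :
    Polynomial.reflect (2*m) (((X + C a) * (X + C b))^m) = ((1 + C a * X) * (1 + C b * X))^m := by
  induction m with
  | zero => simp
  | succ k ih =>
    have h1 : ((X + C a) * (X + C b)).natDegree ≤ 2 := by
      apply (natDegree_mul_le).trans
      simp [natDegree_X_add_C]
    have h2 : (((X + C a) * (X + C b))^k).natDegree ≤ 2*k := by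
      apply (natDegree_pow_le).trans
      calc k * ((X + C a) * (X + C b)).natDegree ≤ k * 2 := Nat.mul_le_mul_left k h1
        _ = 2*k := by ring
    have e2 : Polynomial.reflect 2 ((X + C a) * (X + C b)) = (1 + C a * X) * (1 + C b * X) := by
      have h := reflect_mul (X + C a) (X + C b) (F := 1) (G := 1)
        (natDegree_X_add_C a).le (natDegree_X_add_C b).le
      rw [show (1+1) = 2 from rfl] at h
      rw [h, reflect_X_add_C', reflect_X_add_C']
    have e3 : (((X + C a) * (X + C b))^(k+1))
        = ((X + C a) * (X + C b)) * ((X + C a) * (X + C b))^k := by ring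
    have e4 : 2*(k+1) = 2 + 2*k := by ring
    rw [e3, e4, reflect_mul _ _ h1 h2, e2, ih]
    ring

lemma neg_one_pow_sub (m r : ℕ) (hr : r ≤ m) : ((-1:ℚ))^(m-r) * (-1)^r = (-1)^m := by
  rw [← pow_add]
  congr 1
  omega

open Polynomial in
lemma Q_key (n : ℕ) (x₁ x₂ : ℚ) (h₁ : x₁ ≠ 0) (h₂ : x₂ ≠ 0) (r : ℕ) (hr : r ≤ 2*(n-1)) :
    (x₁*x₂)^(n-1) * Q n r (-1/x₁) (-1/x₂) = (-1)^r * Q n (2*(n-1) - r) x₁ x₂ := by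
  set m := n - 1 with hmdef
  unfold Q
  rw [← hmdef]
  have e1 : ∀ x : ℚ, x ≠ 0 → (X - C (-1/x)) * C x = 1 + C x * X := by
    intro x hx
    have hx1 : (-1/x) * x = -1 := by field_simp
    rw [sub_mul, ← C_mul, hx1, map_neg, map_one]
    ring
  have eA : C ((x₁*x₂)^m) * ((X - C (-1/x₁)) * (X - C (-1/x₂)))^m
      = ((1 + C x₁ * X) * (1 + C x₂ * X))^m := by
    rw [map_pow, map_mul]
    calc (C x₁ * C x₂)^m * ((X - C (-1/x₁)) * (X - C (-1/x₂)))^m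
        = ((X - C (-1/x₁)) * C x₁ * ((X - C (-1/x₂)) * C x₂))^m := by
          rw [← mul_pow]
          congr 1
          ring
      _ = ((1 + C x₁ * X) * (1 + C x₂ * X))^m := by rw [e1 x₁ h₁, e1 x₂ h₂]
  have eC : ((X + C x₁) * (X + C x₂))^m = (((X - C x₁) * (X - C x₂))^m).comp (-X) := by
    simp only [pow_comp, mul_comp, sub_comp, X_comp, C_comp]
    ring
  calc (x₁*x₂)^m * (((X - C (-1/x₁)) * (X - C (-1/x₂)))^m).coeff r
      = (C ((x₁*x₂)^m) * ((X - C (-1/x₁)) * (X - C (-1/x₂)))^m).coeff r := by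
        rw [coeff_C_mul]
    _ = (((1 + C x₁ * X) * (1 + C x₂ * X))^m).coeff r := by rw [eA]
    _ = (Polynomial.reflect (2*m) (((X + C x₁) * (X + C x₂))^m)).coeff r := by
        rw [reflect_key]
    _ = (((X + C x₁) * (X + C x₂))^m).coeff (2*m - r) := by
        rw [coeff_reflect, revAt_le hr]
    _ = (-1)^(2*m - r) * (((X - C x₁) * (X - C x₂))^m).coeff (2*m - r) := by
        rw [eC, coeff_comp_neg_X]
    _ = (-1)^r * (((X - C x₁) * (X - C x₂))^m).coeff (2*m - r) := by
        congr 1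
        have h1 := neg_one_pow_sub (2*m) r hr
        have h2 : ((-1:ℚ))^(2*m) = 1 := by rw [pow_mul]; norm_num
        have h3 : ((-1:ℚ))^r * (-1)^r = 1 := by
          rw [← pow_add, ← two_mul, pow_mul]; norm_num
        rw [h2] at h1
        linear_combination ((-1:ℚ))^r * h1 - ((-1:ℚ))^(2*m-r) * h3

lemma sum_key (n : ℕ) (hn : 1 ≤ n) (c : ℕ → ℚ) (x₁ x₂ : ℚ) (h₁ : x₁ ≠ 0) (h₂ : x₂ ≠ 0) :
    (∑ r ∈ range (2*n-1), c r * Q n r x₁ x₂)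
      + (x₁ * x₂)^(n-1) * (∑ r ∈ range (2*n-1), c r * Q n r (-1/x₁) (-1/x₂))
    = ∑ r ∈ range (2*(n-1)+1),
        (c r + (-1:ℚ)^r * c (2*(n-1) - r)) * Q n r x₁ x₂ := by
  have hrange : 2*n-1 = 2*(n-1)+1 := by omega
  rw [hrange, Finset.mul_sum]
  have step1 : ∑ r ∈ range (2*(n-1)+1), (x₁*x₂)^(n-1) * (c r * Q n r (-1/x₁) (-1/x₂))
      = ∑ r ∈ range (2*(n-1)+1), c r * ((-1:ℚ)^r * Q n (2*(n-1) - r) x₁ x₂) := by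
    apply Finset.sum_congr rfl
    intro r hr
    have hr' : r ≤ 2*(n-1) := by
      have := mem_range.mp hr; omega
    have := Q_key n x₁ x₂ h₁ h₂ r hr'
    linear_combination c r * this
  rw [step1]
  have step2 : ∑ r ∈ range (2*(n-1)+1), c r * ((-1:ℚ)^r * Q n (2*(n-1) - r) x₁ x₂)
      = ∑ r ∈ range (2*(n-1)+1), ((-1:ℚ)^r * c (2*(n-1) - r)) * Q n r x₁ x₂ := by
    rw [← Finset.sum_range_reflect]
    apply Finset.sum_congr rfl
    intro j hj
    have hj' : j ≤ 2*(n-1) := by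
      have := mem_range.mp hj; omega
    have e1 : 2*(n-1) + 1 - 1 - j = 2*(n-1) - j := by omega
    have e2 : 2*(n-1) - (2*(n-1) - j) = j := by omega
    rw [e1, e2]
    have e3 : ((-1:ℚ))^(2*(n-1)-j) = (-1)^j := by
      have h1 := neg_one_pow_sub (2*(n-1)) j hj'
      have h2 : ((-1:ℚ))^(2*(n-1)) = 1 := by rw [pow_mul]; norm_num
      have h3 : ((-1:ℚ))^j * (-1)^j = 1 := by
        rw [← pow_add, ← two_mul, pow_mul]; norm_num
      rw [h2] at h1
      linear_combination ((-1:ℚ))^j * h1 - ((-1:ℚ))^(2*(n-1)-j) * h3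
    rw [e3]
    ring
  rw [step2, ← Finset.sum_add_distrib]
  apply Finset.sum_congr rfl
  intro j _
  ring

open Polynomial in
lemma Q_diag (n j : ℕ) (t : ℚ) :
    Q n j t t = (-1:ℚ)^(2*(n-1)-j) * t^(2*(n-1)-j) * ((2*(n-1)).choose j) := by
  unfold Q
  have h : ((X - C t) * (X - C t))^(n-1) = (X + C (-t))^(2*(n-1)) := by
    rw [← sq, ← pow_mul, map_neg, ← sub_eq_add_neg, mul_comm 2 (n-1), pow_mul, sq]
  rw [h, coeff_X_add_C_pow, neg_pow]

theorem S_invariance_iff (n : ℕ) (hn : 1 ≤ n) (c : ℕ → ℚ) :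
    (∀ x₁ x₂ : ℚ, x₁ ≠ 0 → x₂ ≠ 0 →
        (∑ r ∈ range (2*n-1), c r * Q n r x₁ x₂)
          + (x₁ * x₂)^(n-1) * (∑ r ∈ range (2*n-1), c r * Q n r (-1/x₁) (-1/x₂)) = 0)
      ↔ (∀ r ≤ 2*n-2, c (2*n-2-r) + (-1 : ℚ)^r * c r = 0) := by
  constructor
  · intro H r hr
    set M := 2*(n-1) with hM
    have hr' : r ≤ M := by omega
    have Hd : ∀ t : ℚ, t ≠ 0 →
        ∑ j ∈ range (M+1), (c j + (-1:ℚ)^j * c (M - j)) * Q n j t t = 0 := by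
      intro t ht
      rw [← sum_key n hn c t t ht ht]
      exact H t t ht ht
    set P : Polynomial ℚ := ∑ j ∈ range (M+1),
        Polynomial.C ((c j + (-1:ℚ)^j * c (M - j)) * (-1:ℚ)^(M-j) * ((M).choose j))
          * Polynomial.X^(M-j) with hP
    have hPeval : ∀ t : ℚ, t ≠ 0 → P.eval t = 0 := by
      intro t ht
      rw [hP, Polynomial.eval_finset_sum, ← Hd t ht]
      apply Finset.sum_congr rfl
      intro j _
      rw [Polynomial.eval_mul, Polynomial.eval_C, Polynomial.eval_pow, Polynomial.eval_X, Q_diag]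
      ring
    have hP0 : P = 0 := by
      apply Polynomial.eq_zero_of_infinite_isRoot
      have hinf : ({0}ᶜ : Set ℚ).Infinite := (Set.finite_singleton 0).infinite_compl
      apply hinf.mono
      intro x hx
      exact hPeval x hx
    have hco := congrArg (fun p => Polynomial.coeff p (M - r)) hP0
    simp only [Polynomial.coeff_zero] at hco
    rw [hP, Polynomial.finset_sum_coeff] at hco
    rw [Finset.sum_eq_single r (fun j hj hjr => by
        rw [Polynomial.coeff_C_mul, Polynomial.coeff_X_pow, if_neg (by
          have := mem_range.mp hj
          omega), mul_zero])
      (fun hrr => absurd (mem_range.mpr (by omega)) hrr)] at hco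
    rw [Polynomial.coeff_C_mul, Polynomial.coeff_X_pow, if_pos rfl, mul_one] at hco
    have hch : ((M.choose r : ℚ)) ≠ 0 := Nat.cast_ne_zero.mpr (Nat.choose_pos hr').ne'
    have hsgn : ((-1:ℚ))^(M-r) ≠ 0 := pow_ne_zero _ (by norm_num)
    have hd : c r + (-1:ℚ)^r * c (M - r) = 0 := by
      by_contra hne
      exact (mul_ne_zero (mul_ne_zero hne hsgn) hch) hco
    have h3 : ((-1:ℚ))^r * (-1)^r = 1 := by
      rw [← pow_add, ← two_mul, pow_mul]; norm_num
    rw [show 2*n-2 = M by omega]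
    linear_combination (-1:ℚ)^r * hd - c (M - r) * h3
  · intro H x₁ x₂ h₁ h₂
    rw [sum_key n hn c x₁ x₂ h₁ h₂]
    apply Finset.sum_eq_zero
    intro j hj
    have hj' : j ≤ 2*(n-1) := by
      have := mem_range.mp hj; omega
    have hH := H j (by omega)
    rw [show 2*n-2 = 2*(n-1) by omega] at hH
    have h3 : ((-1:ℚ))^j * (-1)^j = 1 := by
      rw [← pow_add, ← two_mul, pow_mul]; norm_num
    have hz : c j + (-1:ℚ)^j * c (2*(n-1) - j) = 0 := by
      linear_combination (-1:ℚ)^j * hH - c j * h3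
    rw [hz, zero_mul]
end

section
/- Let n ≥ 2 and let p be an odd prime. Let u, v, w be integers with 0 ≤ u, v ≤ n−1, u+v = 2w−1, and 1 ≤ w ≤ n−1. Then ν_p(C(n−1,u)·C(n−1,v)) ≥ ν_p(2w) + (2−(2n−2w))/(p−1) and ν_p(C(n−1,u)·C(n−1,v)) ≥ ν_p(2n−2w) + (2−2w)/(p−1), where ν_p is the p-adic valuation. -/
/-!
By Kummer's theorem `ν_p (C(m, x))` counts the carries when `x` and `m - x` are added in
base `p`. Write `m = n - 1 = w + r`. For `p ^ i ∣ w` with `2r + 1 < p ^ i`, adding without carry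
at level `i` would force `u, v ≤ m ≡ r (mod p ^ i)` there, whereas `u + v ≡ -1 (mod p ^ i)`.
Since `p` is odd, `ν_p (w) = ν_p (2w)`, so at least `ν_p (2w) - log_p (2r + 1)` levels carry in
`u` or in `v`, and `log_p (2r + 1) ≤ 2r / (p - 1)`. The second inequality is the first one for
`m - u`, `m - v`, `n - w`.
-/

open Nat Finset

/-- The levels `1 ≤ i < b` at which adding `k` and `n - k` in base `p` carries. -/
def carries (p n k b : ℕ) : Finset ℕ :=
  {i ∈ Ico 1 b | p ^ i ≤ k % p ^ i + (n - k) % p ^ i}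

theorem padicValNat_choose_eq_card_carries {p n k b : ℕ} [Fact p.Prime] (hkn : k ≤ n)
    (hnb : log p n < b) : padicValNat p (n.choose k) = #(carries p n k b) :=
  padicValNat_choose hkn hnb

theorem Nat.mod_le_mod_of_mod_add_mod_lt {x m q : ℕ} (hx : x ≤ m)
    (h : x % q + (m - x) % q < q) : x % q ≤ m % q := by
  have hm : (x % q + (m - x) % q) % q = m % q := by
    rw [← Nat.add_mod, Nat.add_sub_cancel' hx]
  rw [Nat.mod_eq_of_lt h] at hm
  omega

theorem Nat.cast_log_mul_sub_one_le (b : ℕ) {N : ℕ} (hN : N ≠ 0) :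
    (log b N : ℚ) * (b - 1) ≤ N - 1 := by
  have hbern : 1 + (log b N : ℚ) * (b - 1) ≤ (b : ℚ) ^ log b N :=
    one_add_mul_sub_le_pow (by linarith [b.cast_nonneg (α := ℚ)]) _
  have hpow : (b : ℚ) ^ log b N ≤ N := by exact_mod_cast pow_log_le_self b hN
  linarith

theorem carry_or_carry_of_dvd {q m u v w r : ℕ} (hu : u ≤ m) (hv : v ≤ m)
    (huv : u + v + 1 = 2 * w) (hm : m = w + r) (hqw : q ∣ w) (hrq : 2 * r + 1 < q) :
    q ≤ u % q + (m - u) % q ∨ q ≤ v % q + (m - v) % q := by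
  by_contra! hno
  have hmq : m % q ≤ r := by
    obtain ⟨c, rfl⟩ := hqw
    rw [hm, Nat.mul_add_mod]
    exact Nat.mod_le r q
  have hu' := Nat.mod_le_mod_of_mod_add_mod_lt hu hno.1
  have hv' := Nat.mod_le_mod_of_mod_add_mod_lt hv hno.2
  -- `u % q + v % q + 1` is a positive multiple of `q`, yet at most `2r + 1 < q`.
  have hdvd : q ∣ u % q + v % q + 1 := by
    have hmod : u % q + v % q + 1 ≡ u + v + 1 [MOD q] :=
      ((Nat.mod_modEq u q).add (Nat.mod_modEq v q)).add_right 1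
    refine Nat.modEq_zero_iff_dvd.mp (hmod.trans (Nat.modEq_zero_iff_dvd.mpr ?_))
    exact huv ▸ hqw.mul_left 2
  have := Nat.le_of_dvd (by omega) hdvd
  omega

section CarryCount

variable {p m u v w r : ℕ} [Fact p.Prime]

theorem Ico_log_subset_carries_union (hodd : Odd p) (hu : u ≤ m) (hv : v ≤ m)
    (huv : u + v + 1 = 2 * w) (hm : m = w + r) {b : ℕ} (hb : padicValNat p (2 * w) < b) :
    Ico (log p (2 * r + 1) + 1) (padicValNat p (2 * w) + 1) ⊆
      carries p m u b ∪ carries p m v b := by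
  intro i hi
  rw [mem_Ico] at hi
  have hp1 : 1 < p := Fact.out (p := p.Prime) |>.one_lt
  have hpw : p ^ padicValNat p (2 * w) ∣ w :=
    (hodd.coprime_two_right.pow_left _).dvd_of_dvd_mul_left pow_padicValNat_dvd
  have hqw : p ^ i ∣ w := (pow_dvd_pow p (by omega)).trans hpw
  have hrq : 2 * r + 1 < p ^ i :=
    (lt_pow_succ_log_self hp1 _).trans_le (pow_le_pow_right₀ hp1.le hi.1)
  have hib : i ∈ Ico 1 b := mem_Ico.mpr ⟨by omega, by omega⟩
  rcases carry_or_carry_of_dvd hu hv huv hm hqw hrq with h | h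
  · exact mem_union_left _ (mem_filter.mpr ⟨hib, h⟩)
  · exact mem_union_right _ (mem_filter.mpr ⟨hib, h⟩)

theorem padicValNat_two_mul_le (hodd : Odd p) (hu : u ≤ m) (hv : v ≤ m)
    (huv : u + v + 1 = 2 * w) (hm : m = w + r) :
    padicValNat p (2 * w) ≤ padicValNat p (m.choose u * m.choose v) + log p (2 * r + 1) := by
  set b := max (log p m) (padicValNat p (2 * w)) + 1
  rw [padicValNat.mul (choose_ne_zero hu) (choose_ne_zero hv),
    padicValNat_choose_eq_card_carries hu (b := b) (by omega),
    padicValNat_choose_eq_card_carries hv (b := b) (by omega)]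
  have hcard := (card_le_card (Ico_log_subset_carries_union hodd hu hv huv hm
    (b := b) (by omega))).trans (card_union_le _ _)
  rw [Nat.card_Ico] at hcard
  omega

end CarryCount

theorem padicValNat_two_mul_sub_le {p m u v w r : ℕ} (hp : p.Prime) (hodd : Odd p)
    (hu : u ≤ m) (hv : v ≤ m) (huv : u + v + 1 = 2 * w) (hm : m = w + r) :
    (padicValNat p (2 * w) : ℚ) - 2 * r / (p - 1) ≤
      padicValNat p (m.choose u * m.choose v) := by
  have := Fact.mk hp
  have hp1 : (1 : ℚ) < p := by exact_mod_cast hp.one_lt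
  have hlog : (log p (2 * r + 1) : ℚ) ≤ 2 * r / (p - 1) := by
    rw [le_div_iff₀ (by linarith)]
    have := Nat.cast_log_mul_sub_one_le p (N := 2 * r + 1) (by omega)
    push_cast at this
    linarith
  have hval : (padicValNat p (2 * w) : ℚ)
      ≤ padicValNat p (m.choose u * m.choose v) + log p (2 * r + 1) := by
    exact_mod_cast padicValNat_two_mul_le hodd hu hv huv hm
  linarith

theorem binom_valuation_odd_general (n : ℕ) (p : ℕ) (hp : p.Prime) (hodd : Odd p)
    (u v w : ℕ) (hu : u ≤ n-1) (hv : v ≤ n-1) (huv : u + v = 2*w - 1)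
    (hw1 : 1 ≤ w) (hw : w ≤ n-1) :
    (padicValNat p ((n-1).choose u * (n-1).choose v) : ℚ)
        ≥ (padicValNat p (2*w) : ℚ) + (2 - (2*(n : ℚ) - 2*(w : ℚ))) / ((p : ℚ) - 1)
    ∧ (padicValNat p ((n-1).choose u * (n-1).choose v) : ℚ)
        ≥ (padicValNat p (2*n - 2*w) : ℚ) + (2 - 2*(w : ℚ)) / ((p : ℚ) - 1) := by
  have hcast₁ : ((n - 1 - w : ℕ) : ℚ) = n - 1 - w := by
    rw [Nat.cast_sub hw, Nat.cast_sub (by omega : 1 ≤ n), Nat.cast_one]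
  have hcast₂ : ((w - 1 : ℕ) : ℚ) = w - 1 := by rw [Nat.cast_sub hw1, Nat.cast_one]
  constructor
  · have h := padicValNat_two_mul_sub_le hp hodd hu hv (by omega)
      (by omega : n - 1 = w + (n - 1 - w))
    rw [hcast₁] at h
    have hdiv : (2 - (2 * (n : ℚ) - 2 * w)) / (p - 1) = -(2 * (n - 1 - w) / (p - 1)) := by ring
    linarith
  · have h := padicValNat_two_mul_sub_le hp hodd (Nat.sub_le (n - 1) u) (Nat.sub_le (n - 1) v)
      (by omega) (by omega : n - 1 = (n - w) + (w - 1))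
    rw [choose_symm hu, choose_symm hv, hcast₂, show 2 * (n - w) = 2 * n - 2 * w by omega] at h
    have hdiv : (2 - 2 * (w : ℚ)) / (p - 1) = -(2 * (w - 1) / (p - 1)) := by ring
    linarith

theorem binom_valuation_odd (n : ℕ) (hn : 2 ≤ n) (p : ℕ) (hp : p.Prime) (hodd : Odd p)
    (u v w : ℕ) (hu : u ≤ n-1) (hv : v ≤ n-1) (huv : u + v = 2*w - 1)
    (hw1 : 1 ≤ w) (hw : w ≤ n-1) :
    (padicValNat p ((n-1).choose u * (n-1).choose v) : ℚ)
        ≥ (padicValNat p (2*w) : ℚ) + (2 - (2*(n : ℚ) - 2*(w : ℚ))) / ((p : ℚ) - 1)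
    ∧ (padicValNat p ((n-1).choose u * (n-1).choose v) : ℚ)
        ≥ (padicValNat p (2*n - 2*w) : ℚ) + (2 - 2*(w : ℚ)) / ((p : ℚ) - 1) :=
  binom_valuation_odd_general n p hp hodd u v w hu hv huv hw1 hw
end

section
/- Let n ≥ 2 and let u, v, w be integers with 0 ≤ u, v ≤ n−1, u+v = 2w−1, and 1 ≤ w ≤ n−1. Then ν_2(C(n−1,u)·C(n−1,v)) ≥ ν_2(2w) − (n−w) and ν_2(C(n−1,u)·C(n−1,v)) ≥ ν_2(2n−2w) − w. -/
/-!
By Kummer's theorem `ν₂ (C(m, u))` counts the positions at which adding `u` and `m - u` in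
base 2 carries, and there is a carry into position `j + 1` as soon as `m % 2 ^ (j + 1) <
u % 2 ^ (j + 1)`. Let `m = n - 1` and `2 ^ e ∥ w`. For `j ≤ e` we have `2 ^ (j + 1) ∣ u + v + 1`,
so the residues of `u` and `v` modulo `2 ^ (j + 1)` add up to `2 ^ (j + 1) - 1` and one of them
is at least `2 ^ j`; hence every zero among the bits `0, …, e` of `m` yields a carry for `u` or
for `v`. The bits `0, …, e - 1` of `m` contain at most `m % 2 ^ e ≤ m - w` ones, because
`2 ^ e ∣ w ≤ m`, so `ν₂ (C(m, u) C(m, v)) ≥ e + 1 - (m - w + 1)`. This is the first inequality;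
the second is the first one applied to `m - u`, `m - v` and `n - w`.
-/

open Finset

namespace Nat

theorem le_mod_add_sub_mod_of_mod_lt {P k n : ℕ} (hkn : k ≤ n) (h : n % P < k % P) :
    P ≤ k % P + (n - k) % P := by
  by_contra! hlt
  have hsum : (k % P + (n - k) % P) % P = n % P := by
    rw [← Nat.add_mod, Nat.add_sub_cancel' hkn]
  rw [Nat.mod_eq_of_lt hlt] at hsum
  omega

theorem mod_add_mod_add_one_eq_of_dvd {P a b : ℕ} (h : P ∣ a + b + 1) :
    a % P + b % P + 1 = P := by
  have hP : 0 < P := Nat.pos_of_ne_zero (by rintro rfl; simp at h)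
  have hdvd : P ∣ a % P + b % P + 1 := by
    simpa [Nat.dvd_iff_mod_eq_zero, Nat.add_mod] using h
  obtain ⟨c, hc⟩ := hdvd
  have ha := Nat.mod_lt a hP
  have hb := Nat.mod_lt b hP
  rcases c with _ | _ | c
  · omega
  · omega
  · nlinarith

theorem mod_lt_or_mod_lt_of_two_pow_succ_dvd {m u v j : ℕ} (h : 2 ^ (j + 1) ∣ u + v + 1)
    (hm : m % 2 ^ (j + 1) < 2 ^ j) :
    m % 2 ^ (j + 1) < u % 2 ^ (j + 1) ∨ m % 2 ^ (j + 1) < v % 2 ^ (j + 1) := by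
  have hsum := mod_add_mod_add_one_eq_of_dvd h
  have hpow : 2 ^ (j + 1) = 2 * 2 ^ j := Nat.pow_succ'
  omega

theorem mod_le_sub_of_dvd {P m w : ℕ} (hP : P ∣ w) (hw : w ≤ m) : m % P ≤ m - w := by
  obtain ⟨c, rfl⟩ := hP
  calc m % P = (m - P * c + P * c) % P := by rw [Nat.sub_add_cancel hw]
    _ = (m - P * c) % P := Nat.add_mul_mod_self_left _ _ _
    _ ≤ m - P * c := Nat.mod_le _ _

theorem card_filter_mod_lt_le_padicValNat_choose {p n k : ℕ} [Fact p.Prime] (hkn : k ≤ n)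
    (s : ℕ) :
    #{j ∈ range s | n % p ^ (j + 1) < k % p ^ (j + 1)} ≤ padicValNat p (n.choose k) := by
  rw [padicValNat_choose hkn (by omega : log p n < s + log p n + 1)]
  refine card_le_card_of_injOn (· + 1) (fun j hj => ?_) (add_left_injective 1).injOn
  simp only [mem_coe, mem_filter, mem_range, mem_Ico] at hj ⊢
  exact ⟨⟨by omega, by omega⟩, le_mod_add_sub_mod_of_mod_lt hkn hj.2⟩

theorem card_filter_two_pow_le_mod_le (m k : ℕ) :
    #{j ∈ range k | 2 ^ j ≤ m % 2 ^ (j + 1)} ≤ m % 2 ^ k := by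
  induction k with
  | zero => simp
  | succ k ih =>
    have hbit : m % 2 ^ (k + 1) = m % 2 ^ k + 2 ^ k * (m / 2 ^ k % 2) := Nat.mod_pow_succ
    have hlow := Nat.mod_lt m (Nat.two_pow_pos k)
    rw [range_add_one, filter_insert]
    have := card_insert_le k {j ∈ range k | 2 ^ j ≤ m % 2 ^ (j + 1)}
    split_ifs <;>
    rcases Nat.mod_two_eq_zero_or_one (m / 2 ^ k) with h | h <;>
    simp only [h, mul_zero, add_zero, mul_one] at hbit <;> omega

end Nat

theorem padicValNat_two_le_padicValNat_choose_mul_choose_add_sub {m u v w : ℕ}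
    (hu : u ≤ m) (hv : v ≤ m) (huv : u + v + 1 = 2 * w) (hw : w ≤ m) :
    padicValNat 2 w ≤ padicValNat 2 (m.choose u * m.choose v) + (m - w) := by
  have hpow : 2 ^ padicValNat 2 w ∣ w := pow_padicValNat_dvd
  generalize padicValNat 2 w = e at hpow ⊢
  have hzeros : #{j ∈ range (e + 1) | m % 2 ^ (j + 1) < 2 ^ j}
      ≤ padicValNat 2 (m.choose u * m.choose v) := by
    have hsub : {j ∈ range (e + 1) | m % 2 ^ (j + 1) < 2 ^ j}
        ⊆ {j ∈ range (e + 1) | m % 2 ^ (j + 1) < u % 2 ^ (j + 1)}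
          ∪ {j ∈ range (e + 1) | m % 2 ^ (j + 1) < v % 2 ^ (j + 1)} := by
      intro j hj
      rw [mem_filter, mem_range] at hj
      rw [← filter_or, mem_filter, mem_range]
      have hdvd : 2 ^ (j + 1) ∣ u + v + 1 := by
        rw [huv, pow_succ']
        exact mul_dvd_mul_left 2 ((pow_dvd_pow 2 (by omega)).trans hpow)
      exact ⟨hj.1, Nat.mod_lt_or_mod_lt_of_two_pow_succ_dvd hdvd hj.2⟩
    rw [padicValNat.mul (Nat.choose_pos hu).ne' (Nat.choose_pos hv).ne']
    calc _ ≤ _ := card_le_card hsub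
      _ ≤ _ := card_union_le _ _
      _ ≤ _ := add_le_add (Nat.card_filter_mod_lt_le_padicValNat_choose hu _)
          (Nat.card_filter_mod_lt_le_padicValNat_choose hv _)
  have hones : #{j ∈ range (e + 1) | ¬ m % 2 ^ (j + 1) < 2 ^ j} ≤ m - w + 1 := by
    simp only [not_lt]
    rw [range_add_one, filter_insert]
    have hlow := Nat.card_filter_two_pow_le_mod_le m e
    have hmod := Nat.mod_le_sub_of_dvd hpow hw
    have := card_insert_le e {j ∈ range e | 2 ^ j ≤ m % 2 ^ (j + 1)}
    split_ifs <;> omega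
  have hsplit :=
    card_filter_add_card_filter_not (s := range (e + 1)) (fun j => m % 2 ^ (j + 1) < 2 ^ j)
  rw [card_range] at hsplit
  omega

theorem binom_valuation_two_general (n : ℕ)
    (u v w : ℕ) (hu : u ≤ n-1) (hv : v ≤ n-1) (huv : u + v = 2*w - 1)
    (hw1 : 1 ≤ w) (hw : w ≤ n-1) :
    (padicValNat 2 ((n-1).choose u * (n-1).choose v) : ℤ)
        ≥ (padicValNat 2 (2*w) : ℤ) - ((n : ℤ) - (w : ℤ))
    ∧ (padicValNat 2 ((n-1).choose u * (n-1).choose v) : ℤ)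
        ≥ (padicValNat 2 (2*n - 2*w) : ℤ) - (w : ℤ) := by
  have hdirect := padicValNat_two_le_padicValNat_choose_mul_choose_add_sub hu hv (by omega) hw
  have hcompl := padicValNat_two_le_padicValNat_choose_mul_choose_add_sub (w := n - w)
    (Nat.sub_le (n - 1) u) (Nat.sub_le (n - 1) v) (by omega) (by omega)
  rw [Nat.choose_symm hu, Nat.choose_symm hv] at hcompl
  rw [padicValNat_base_mul one_lt_two (by omega), show 2 * n - 2 * w = 2 * (n - w) by omega,
    padicValNat_base_mul one_lt_two (by omega)]
  omega

theorem binom_valuation_two (n : ℕ) (hn : 2 ≤ n)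
    (u v w : ℕ) (hu : u ≤ n-1) (hv : v ≤ n-1) (huv : u + v = 2*w - 1)
    (hw1 : 1 ≤ w) (hw : w ≤ n-1) :
    (padicValNat 2 ((n-1).choose u * (n-1).choose v) : ℤ)
        ≥ (padicValNat 2 (2*w) : ℤ) - ((n : ℤ) - (w : ℤ))
    ∧ (padicValNat 2 ((n-1).choose u * (n-1).choose v) : ℤ)
        ≥ (padicValNat 2 (2*n - 2*w) : ℤ) - (w : ℤ) :=
  binom_valuation_two_general n u v w hu hv huv hw1 hw
end

section
/- For even n ≥ 2, the denominator of B_n/n (in lowest terms) equals ∏_{p prime, (p−1) | n} p^{1+ν_p(n)}. -/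
/-!
Fix a prime `p`. By von Staudt–Clausen, `|B_n|_p = p` when `(p - 1) ∣ n`, which produces the
factor `p ^ (1 + ν_p(n))`. When `(p - 1) ∤ n`, Adams' theorem `|B_n|_p ≤ |n|_p` shows that `p`
does not divide the denominator at all.

For Adams' theorem let `m = p ^ L` and `S = ∑_{k < m} k ^ n`. Faulhaber's formula gives
`|B_n - S / m|_p ≤ p ^ (2 - L)`. Since `(ZMod p)ˣ` is cyclic of order `p - 1`, there is a `c` prime
to `p` with `c ^ n ≢ 1 (mod p)`. Multiplication by `c` permutes the residues mod `m`, and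
expanding `(c k) ^ n` around its residue gives `(c ^ n - 1) S ∈ n m ℤ + m ^ 2 ℤ`, whence
`|S / m|_p ≤ |n|_p` as soon as `L ≥ ν_p(n)`.
-/

open Finset

lemma Nat.eq_prod_pow_of_padicValNat_eq {a : ℕ} (ha : a ≠ 0) {s : Finset ℕ}
    (hs : ∀ p ∈ s, p.Prime) {e : ℕ → ℕ}
    (h : ∀ p, p.Prime → padicValNat p a = if p ∈ s then e p else 0) :
    a = ∏ p ∈ s, p ^ e p := by
  have hne : ∀ p ∈ s, p ^ e p ≠ 0 := fun p hp => pow_ne_zero _ (hs p hp).ne_zero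
  refine Nat.eq_of_factorization_eq ha (prod_ne_zero_iff.mpr hne) fun q => ?_
  rw [Nat.factorization_prod hne, Finset.sum_apply',
    sum_congr rfl fun p hp => by rw [(hs p hp).factorization_pow, Finsupp.single_apply]]
  by_cases hq : q.Prime
  · rw [Nat.factorization_def a hq, h q hq, sum_ite_eq']
  · rw [Nat.factorization_eq_zero_of_not_prime a hq, sum_ite_eq', if_neg fun hm => hq (hs q hm)]

lemma sum_range_mul_mod {M : Type*} [AddCommMonoid M] {c m : ℕ} (hc : c.Coprime m)
    (f : ℕ → M) : ∑ k ∈ range m, f (c * k % m) = ∑ k ∈ range m, f k := by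
  rcases m with _ | m
  · simp
  have hsum (g : ℕ → M) : ∑ k ∈ range (m + 1), g k = ∑ x : ZMod (m + 1), g x.val :=
    (Fin.sum_univ_eq_sum_range g _).symm
  rw [hsum, hsum]
  refine Fintype.sum_equiv (Units.mulLeft (ZMod.unitOfCoprime c hc)) _ _ fun x => ?_
  simp [ZMod.val_mul, ZMod.val_natCast]

lemma exists_pow_sub_one_mul_sum_range_pow {c m : ℕ} (hc : c.Coprime m) (n : ℕ) :
    ∃ W Z : ℤ, ((c : ℤ) ^ n - 1) * ∑ k ∈ range m, (k : ℤ) ^ n = n * m * W + m ^ 2 * Z := by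
  set r : ℕ → ℤ := fun k => (c * k % m : ℕ)
  set q : ℕ → ℤ := fun k => (c * k / m : ℕ)
  have hexpand (k : ℕ) : ∃ z : ℤ,
      ((c : ℤ) * k) ^ n = r k ^ n + n * m * (r k ^ (n - 1) * q k) + m ^ 2 * (z * q k ^ 2) := by
    obtain ⟨z, hz⟩ := (Polynomial.X ^ n : Polynomial ℤ).binomExpansion (r k) (m * q k)
    have hck : (c * k : ℤ) = r k + m * q k := by
      simp only [r, q]; exact_mod_cast (Nat.mod_add_div (c * k) m).symm
    simp only [Polynomial.eval_pow, Polynomial.eval_X, Polynomial.derivative_X_pow,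
      Polynomial.eval_mul, Polynomial.eval_C, ← hck] at hz
    exact ⟨z, by rw [hz]; ring⟩
  choose z hz using hexpand
  refine ⟨∑ k ∈ range m, r k ^ (n - 1) * q k, ∑ k ∈ range m, z k * q k ^ 2, ?_⟩
  calc ((c : ℤ) ^ n - 1) * ∑ k ∈ range m, (k : ℤ) ^ n
      = ∑ k ∈ range m, ((c : ℤ) * k) ^ n - ∑ k ∈ range m, r k ^ n := by
        rw [sum_range_mul_mod hc (fun j => (j : ℤ) ^ n), sub_one_mul, mul_sum]
        simp only [mul_pow]
    _ = n * m * ∑ k ∈ range m, r k ^ (n - 1) * q k + m ^ 2 * ∑ k ∈ range m, z k * q k ^ 2 := by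
        simp only [hz, sum_add_distrib, mul_sum]; ring

lemma sum_range_pow_div_eq (n : ℕ) {m : ℕ} (hm : m ≠ 0) :
    (∑ k ∈ range m, (k : ℚ) ^ n) / m = bernoulli n
      + ∑ i ∈ range n, bernoulli i * n.choose i * (m : ℚ) ^ (n - i) / ((n - i : ℕ) + 1) := by
  have hm' : (m : ℚ) ≠ 0 := Nat.cast_ne_zero.mpr hm
  rw [sum_range_pow, sum_range_succ, add_div, sum_div, add_comm]
  congr 1
  · rw [Nat.choose_succ_self_right, Nat.add_sub_cancel_left, pow_one]
    field_simp
    push_cast; ring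
  · refine sum_congr rfl fun i hi => ?_
    have hchoose : ((n + 1).choose i : ℚ) * ((n - i : ℕ) + 1) = n.choose i * (n + 1) := by
      have := Nat.choose_mul_succ_eq n i
      rw [show n + 1 - i = n - i + 1 by grind] at this
      exact_mod_cast this.symm
    rw [show n + 1 - i = n - i + 1 by grind, pow_succ]
    field_simp
    linear_combination bernoulli i * hchoose

namespace VonStaudt

lemma padicNorm_natCast {p j : ℕ} (hj : j ≠ 0) :
    padicNorm p j = (p : ℚ) ^ (-(padicValNat p j : ℤ)) := by
  rw [padicNorm.eq_zpow_of_nonzero (Nat.cast_ne_zero.mpr hj), padicValRat.of_nat]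

variable {p : ℕ} [hp : Fact p.Prime]

lemma padicNorm_prime_pow (j : ℕ) : padicNorm p ((p : ℚ) ^ j) = (p : ℚ) ^ (-(j : ℤ)) := by
  rw [← Nat.cast_pow, padicNorm_natCast (pow_ne_zero _ hp.out.ne_zero), padicValNat.prime_pow]

lemma padicNorm_inv_prime : padicNorm p (p : ℚ)⁻¹ = p := by
  rw [inv_eq_one_div, padicNorm.div, padicNorm.one, padicNorm.padicNorm_p_of_prime, one_div,
    inv_inv]

lemma padicNorm_one_div_prime_of_ne {q : ℕ} (hq : q.Prime) (hqp : q ≠ p) :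
    padicNorm p (1 / q) = 1 := by
  rw [padicNorm.div, padicNorm.one, (padicNorm.nat_eq_one_iff q).mpr, div_one]
  exact fun h => hqp ((Nat.prime_dvd_prime_iff_eq hp.out hq).mp h).symm

lemma padicNorm_inv_natCast_succ_le (d : ℕ) : padicNorm p ((d + 1 : ℚ))⁻¹ ≤ (p : ℚ) ^ d := by
  have hval : padicValNat p (d + 1) ≤ d :=
    Nat.lt_succ_iff.mp ((padicValNat_le_nat_log _).trans_lt (Nat.log_lt_self p d.succ_ne_zero))
  rw [inv_eq_one_div, padicNorm.div, padicNorm.one, ← Nat.cast_succ,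
    padicNorm_natCast d.succ_ne_zero, zpow_neg, one_div, inv_inv, zpow_natCast]
  exact pow_le_pow_right₀ (by exact_mod_cast hp.out.one_le) hval

lemma padicValNat_den (x : ℚ) : padicValNat p x.den = (-padicValRat p x).toNat := by
  rw [padicValRat_def]
  by_cases hd : p ∣ x.den
  · have hnum : ¬ (p : ℤ) ∣ x.num := fun hn =>
      hp.out.not_dvd_one (x.reduced.gcd_eq_one ▸ Nat.dvd_gcd (Int.ofNat_dvd_left.mp hn) hd)
    simp [padicValInt.eq_zero_of_not_dvd hnum]
  · simp [padicValNat.eq_zero_of_not_dvd hd]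

lemma padicValNat_den_of_padicNorm_eq {x : ℚ} {k : ℕ} (h : padicNorm p x = (p : ℚ) ^ k) :
    padicValNat p x.den = k := by
  have hp0 : (0 : ℚ) < p := by exact_mod_cast hp.out.pos
  have hx : x ≠ 0 := by rintro rfl; exact (pow_pos hp0 k).ne (by simpa using h)
  rw [padicNorm.eq_zpow_of_nonzero hx, ← zpow_natCast] at h
  have hv := zpow_right_injective₀ hp0 (by exact_mod_cast hp.out.ne_one) h
  rw [padicValNat_den, hv, Int.toNat_natCast]

lemma padicValNat_den_of_padicNorm_le_one {x : ℚ} (h : padicNorm p x ≤ 1) :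
    padicValNat p x.den = 0 := by
  rcases eq_or_ne x 0 with rfl | hx
  · simp
  rw [padicNorm.eq_zpow_of_nonzero hx,
    zpow_le_one_iff_right₀ (by exact_mod_cast hp.out.one_lt)] at h
  rw [padicValNat_den, Int.toNat_eq_zero]
  exact h

lemma padicNorm_bernoulli_add_le {n : ℕ} (hn : Even n) (h0 : n ≠ 0) :
    padicNorm p (bernoulli n + if (p - 1) ∣ n then (p : ℚ)⁻¹ else 0) ≤ 1 := by
  obtain ⟨k, rfl⟩ := hn.two_dvd
  obtain ⟨T, hT⟩ := Bernoulli.vonStaudt_clausen k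
  set S := (range (2 * k + 2)).filter (fun q => q.Prime ∧ (q - 1) ∣ 2 * k)
  have hmem : p ∈ S ↔ (p - 1) ∣ 2 * k := by
    simp only [S, mem_filter, mem_range, hp.out, true_and, and_iff_right_iff_imp]
    intro h
    have := Nat.le_of_dvd (by omega) h
    omega
  have hsplit : ∑ q ∈ S, (1 / q : ℚ)
      = ∑ q ∈ S with q ≠ p, (1 / q : ℚ) + if (p - 1) ∣ 2 * k then (p : ℚ)⁻¹ else 0 := by
    rw [← sum_filter_add_sum_filter_not S (· ≠ p)]
    simp only [not_not, filter_eq', hmem]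
    split_ifs <;> simp
  have hrest : padicNorm p (∑ q ∈ S with q ≠ p, (1 / q : ℚ)) ≤ 1 := by
    refine padicNorm.sum_le' (fun q hq => ?_) zero_le_one
    simp only [S, mem_filter] at hq
    exact (padicNorm_one_div_prime_of_ne hq.1.2.1 hq.2).le
  rw [show bernoulli (2 * k) + (if (p - 1) ∣ 2 * k then (p : ℚ)⁻¹ else 0)
      = T - ∑ q ∈ S with q ≠ p, (1 / q : ℚ) by rw [hT, hsplit]; ring]
  exact padicNorm.sub.trans (max_le (padicNorm.of_int T) hrest)

lemma padicNorm_bernoulli_of_dvd {n : ℕ} (hn : Even n) (h0 : n ≠ 0) (h : (p - 1) ∣ n) :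
    padicNorm p (bernoulli n) = p := by
  have hle := padicNorm_bernoulli_add_le (p := p) hn h0
  rw [if_pos h] at hle
  have hp1 : (1 : ℚ) < p := by exact_mod_cast hp.out.one_lt
  have hne : padicNorm p (bernoulli n + (p : ℚ)⁻¹) ≠ padicNorm p (-(p : ℚ)⁻¹) := by
    rw [padicNorm.neg, padicNorm_inv_prime]; exact (hle.trans_lt hp1).ne
  calc padicNorm p (bernoulli n) = padicNorm p (bernoulli n + (p : ℚ)⁻¹ + -(p : ℚ)⁻¹) := by
        ring_nf
    _ = p := by
      rw [padicNorm.add_eq_max_of_ne hne, padicNorm.neg, padicNorm_inv_prime,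
        max_eq_right (hle.trans hp1.le)]

lemma padicNorm_bernoulli_le (n : ℕ) : padicNorm p (bernoulli n) ≤ p := by
  have hp1 : (1 : ℚ) ≤ p := by exact_mod_cast hp.out.one_le
  rcases Nat.even_or_odd n with hn | hn
  · rcases eq_or_ne n 0 with rfl | h0
    · simpa using hp1
    set δ : ℚ := if (p - 1) ∣ n then (p : ℚ)⁻¹ else 0
    have hδ : padicNorm p δ ≤ p := by
      simp only [δ]; split_ifs
      · exact padicNorm_inv_prime.le
      · simp
    calc padicNorm p (bernoulli n) = padicNorm p ((bernoulli n + δ) - δ) := by ring_nf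
      _ ≤ p := padicNorm.sub.trans (max_le ((padicNorm_bernoulli_add_le hn h0).trans hp1) hδ)
  · rcases eq_or_ne n 1 with rfl | h1
    · rw [bernoulli_one, neg_div, padicNorm.neg, one_div,
        show (2 : ℚ) = (1 : ℕ) + 1 by norm_num]
      simpa using padicNorm_inv_natCast_succ_le (p := p) 1
    · rw [bernoulli_eq_zero_of_odd hn (by grind)]
      simp

lemma padicNorm_bernoulli_sub_sum_pow_div_le (n : ℕ) {L : ℕ} (hL : 1 ≤ L) :
    padicNorm p (bernoulli n - (∑ k ∈ range (p ^ L), (k : ℚ) ^ n) / (p ^ L : ℕ))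
      ≤ (p : ℚ) ^ (2 - L : ℤ) := by
  have hp0 : (0 : ℚ) < p := by exact_mod_cast hp.out.pos
  have hp1 : (1 : ℚ) ≤ p := by exact_mod_cast hp.out.one_le
  rw [sum_range_pow_div_eq n (pow_ne_zero L hp.out.ne_zero), sub_add_cancel_left, padicNorm.neg]
  refine padicNorm.sum_le' (fun i hi => ?_) (zpow_nonneg hp0.le _)
  have hd : 1 ≤ n - i := by have := mem_range.mp hi; omega
  have hpow : padicNorm p (((p ^ L : ℕ) : ℚ) ^ (n - i)) = (p : ℚ) ^ (-(L * (n - i) : ℕ) : ℤ) := by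
    rw [Nat.cast_pow, ← pow_mul, padicNorm_prime_pow]
  rw [div_eq_mul_inv, padicNorm.mul, padicNorm.mul, padicNorm.mul, hpow]
  calc padicNorm p (bernoulli i) * padicNorm p (n.choose i) * (p : ℚ) ^ (-(L * (n - i) : ℕ) : ℤ)
        * padicNorm p (((n - i : ℕ) : ℚ) + 1)⁻¹
      ≤ (p : ℚ) ^ (1 : ℤ) * 1 * (p : ℚ) ^ (-(L * (n - i) : ℕ) : ℤ)
        * (p : ℚ) ^ ((n - i : ℕ) : ℤ) := by
        have hB := padicNorm_bernoulli_le (p := p) i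
        have hC := padicNorm.of_nat (p := p) (n.choose i)
        have hI := padicNorm_inv_natCast_succ_le (p := p) (n - i)
        rw [zpow_one, zpow_natCast]
        gcongr <;> exact padicNorm.nonneg _
    _ = (p : ℚ) ^ (1 - (L * (n - i) : ℕ) + (n - i : ℕ) : ℤ) := by
        rw [mul_one, ← zpow_add₀ hp0.ne', ← zpow_add₀ hp0.ne', sub_eq_add_neg]
    _ ≤ (p : ℚ) ^ (2 - L : ℤ) := by
        refine zpow_le_zpow_right₀ hp1 ?_
        push_cast
        nlinarith

lemma exists_coprime_padicNorm_pow_sub_one_eq_one {n : ℕ} (h : ¬ (p - 1) ∣ n) :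
    ∃ c : ℕ, c.Coprime p ∧ padicNorm p ((c : ℚ) ^ n - 1) = 1 := by
  obtain ⟨u, hu⟩ : ∃ u : (ZMod p)ˣ, u ^ n ≠ 1 := by
    by_contra! hall
    rw [← ZMod.card_units p, ← Nat.card_eq_fintype_card, ← IsCyclic.exponent_eq_card] at h
    exact h (Monoid.exponent_dvd_of_forall_pow_eq_one hall)
  refine ⟨(u : ZMod p).val, ZMod.val_coe_unit_coprime u, ?_⟩
  rw [show ((u : ZMod p).val : ℚ) ^ n - 1 = (((u : ZMod p).val : ℤ) ^ n - 1 : ℤ) by push_cast; rfl,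
    padicNorm.int_eq_one_iff, ← ZMod.intCast_zmod_eq_zero_iff_dvd]
  push_cast
  rw [ZMod.natCast_zmod_val, sub_eq_zero]
  exact fun h => hu (Units.ext (by simpa using h))

theorem padicNorm_bernoulli_le_padicNorm_self {n : ℕ} (h : ¬ (p - 1) ∣ n) :
    padicNorm p (bernoulli n) ≤ padicNorm p n := by
  have hn0 : n ≠ 0 := by rintro rfl; exact h (dvd_zero _)
  have hp1 : (1 : ℚ) ≤ p := by exact_mod_cast hp.out.one_le
  set e := padicValNat p n
  -- `L = e + 2` makes the Faulhaber error `p ^ (2 - L)` equal to `|n|_p`.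
  set L := e + 2
  set m := p ^ L
  have hm0 : (m : ℚ) ≠ 0 := Nat.cast_ne_zero.mpr (pow_ne_zero L hp.out.ne_zero)
  obtain ⟨c, hcp, hc⟩ := exists_coprime_padicNorm_pow_sub_one_eq_one h
  obtain ⟨W, Z, hWZ⟩ := exists_pow_sub_one_mul_sum_range_pow (hcp.pow_right L) n
  set S := ∑ k ∈ range m, (k : ℚ) ^ n
  have hn : padicNorm p n = (p : ℚ) ^ (-e : ℤ) := padicNorm_natCast hn0
  have hm : padicNorm p m = (p : ℚ) ^ (-L : ℤ) := by
    simp only [m, Nat.cast_pow, padicNorm_prime_pow]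
  have hS : padicNorm p (S / m) ≤ padicNorm p n := by
    have htwist : ((c : ℚ) ^ n - 1) * (S / m) = n * W + m * Z := by
      have hWZ' : ((c : ℚ) ^ n - 1) * S = n * m * W + m ^ 2 * Z := by
        have := congrArg (Int.cast : ℤ → ℚ) hWZ
        push_cast at this
        simpa only [S, m, Nat.cast_pow] using this
      rw [← mul_div_assoc, hWZ']
      field_simp
    calc padicNorm p (S / m) = padicNorm p (n * W + m * Z) := by
          rw [← htwist, padicNorm.mul, hc, one_mul]
      _ ≤ max (padicNorm p n) (padicNorm p m) := by
          refine padicNorm.nonarchimedean.trans (max_le_max ?_ ?_) <;>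
          · rw [padicNorm.mul]
            exact mul_le_of_le_one_right (padicNorm.nonneg _) (padicNorm.of_int _)
      _ = padicNorm p n := by
          rw [hn, hm]
          exact max_eq_left (zpow_le_zpow_right₀ hp1 (by omega))
  have hdiff : padicNorm p (bernoulli n - S / m) ≤ padicNorm p n := by
    rw [hn]
    convert padicNorm_bernoulli_sub_sum_pow_div_le (p := p) n (L := L) (by omega) using 2
    omega
  calc padicNorm p (bernoulli n) = padicNorm p (bernoulli n - S / m + S / m) := by ring_nf
    _ ≤ padicNorm p n := padicNorm.nonarchimedean.trans (max_le hdiff hS)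

theorem padicValNat_den_bernoulli_div {n : ℕ} (hn : Even n) (h0 : n ≠ 0) :
    padicValNat p (bernoulli n / n).den = if (p - 1) ∣ n then 1 + padicValNat p n else 0 := by
  split_ifs with h
  · apply padicValNat_den_of_padicNorm_eq
    rw [padicNorm.div, padicNorm_bernoulli_of_dvd hn h0 h, padicNorm_natCast h0, zpow_neg,
      div_inv_eq_mul, zpow_natCast, pow_add, pow_one]
  · apply padicValNat_den_of_padicNorm_le_one
    rw [padicNorm.div]
    exact div_le_one_of_le₀ (padicNorm_bernoulli_le_padicNorm_self h) (padicNorm.nonneg _)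

end VonStaudt

open VonStaudt in
/-- Von Staudt's second theorem: for even n ≥ 2, the denominator of B_n/n in lowest
terms is the product of p^{1+ν_p(n)} over all primes p with (p-1) ∣ n. -/
theorem vonStaudt_second (n : ℕ) (hn : Even n) (h2 : 2 ≤ n) :
    ((bernoulli n / n : ℚ)).den
      = ∏ p ∈ (range (n+2)).filter (fun p => p.Prime ∧ (p-1) ∣ n),
          p^(1 + padicValNat p n) := by
  refine Nat.eq_prod_pow_of_padicValNat_eq (Rat.den_ne_zero _)
    (fun p hp => (mem_filter.mp hp).2.1) fun p hp => ?_
  have : Fact p.Prime := ⟨hp⟩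
  have hlt : (p - 1) ∣ n → p < n + 2 := fun h => by have := Nat.le_of_dvd (by omega) h; omega
  rw [padicValNat_den_bernoulli_div hn (by omega)]
  by_cases h : (p - 1) ∣ n <;> simp [h, hp, hlt]
end

section
/- For n ≥ 3, the statement G_n ∈ ℤ[x₁,x₂] is equivalent to: for all nonnegative integers u, v, w with 1 ≤ w ≤ n/2 and u+v = 2w−1, the rational number j_n · C(n−1,u) · C(n−1,v) · ( (B_{2n}/(2n))(B_{2w}/(2w) + B_{2n−2w}/(2n−2w)) − (B_{2w}/(2w))(B_{2n−2w}/(2n−2w)) ) + δ_{w,1}/2 is an integer. -/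
/-!
The coefficient of `x₁^(n-1-u) x₂^(n-1-v)` in `G_n` is `± j_n ξ_(u+v) C(n-1,u) C(n-1,v)`.
As odd Bernoulli numbers beyond `B₁` vanish, `ξ_r = 0` for even `r`; the symmetries
`ξ_r = ξ_(r*)` and `C(n-1,u) = C(n-1,n-1-u)` reduce odd `u + v = 2w - 1` to `2w ≤ n`.
There `ξ_(2w-1)` is the Bernoulli expression of the statement, except that for `w = 1`
(where `C(n-1,u) C(n-1,v) = n - 1`) the extra term contributes `-j_n (B_(2n)/(2n)) / 2`.
This is `1/2` modulo `ℤ`: by von Staudt–Clausen `2` divides the denominator of `B_(2n)`,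
so the numerator `j_n B_(2n)/(2n)` is odd.
-/

open Finset

/-- ξ_r, with ξ_0 = ξ_{2n-2} = 0. -/
noncomputable def xi (n r : ℕ) : ℚ :=
  if r = 0 ∨ r = 2*n-2 then 0
  else beta (2*n-1) * (beta r + beta (2*n-2-r)
        + ((if r = 1 then 1 else 0) + (if 2*n-2-r = 1 then 1 else 0)) / (2*(n : ℚ) - 2))
      - beta r * beta (2*n-2-r)

/-- Q_r as a polynomial in two variables: the coefficient of z^r in ((z-x₁)(z-x₂))^{n-1}. -/
noncomputable def Qpoly (n r : ℕ) : MvPolynomial (Fin 2) ℚ :=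
  Polynomial.coeff
    ((((Polynomial.X - Polynomial.C (MvPolynomial.X 0))
        * (Polynomial.X - Polynomial.C (MvPolynomial.X 1)))
        : Polynomial (MvPolynomial (Fin 2) ℚ))^(n-1)) r

/-- j_n : the denominator of B_{2n}/(2n) in lowest terms. -/
noncomputable def jden (n : ℕ) : ℕ := (bernoulli (2*n) / (2*n) : ℚ).den

/-- G_n(x₁,x₂) := j_n Σ_r ξ_r Q_r(x₁,x₂). -/
noncomputable def Gpoly (n : ℕ) : MvPolynomial (Fin 2) ℚ :=
  (jden n : ℚ) • ∑ r ∈ range (2*n-1), xi n r • Qpoly n r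

lemma Rat.odd_num_of_two_dvd_den {q : ℚ} (h : 2 ∣ q.den) : Odd q.num := by
  rw [← Int.natAbs_odd, ← Nat.not_even_iff_odd, even_iff_two_dvd]
  exact fun h2 => Nat.not_coprime_of_dvd_of_dvd one_lt_two h2 h q.reduced

lemma Rat.den_neg_one_pow_mul (k : ℕ) (x : ℚ) : ((-1) ^ k * x).den = x.den := by
  rcases neg_one_pow_eq_or ℚ k with h | h <;> simp [h]

lemma Rat.den_eq_one_iff_exists_intCast {q : ℚ} : q.den = 1 ↔ ∃ a : ℤ, q = a :=
  ⟨fun h => ⟨q.num, ((Rat.den_eq_one_iff q).1 h).symm⟩,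
    fun ⟨a, ha⟩ => ha ▸ Rat.den_intCast a⟩

lemma exists_intCast_eq_iff_of_sub_eq {x y : ℚ} {z : ℤ} (h : x - y = z) :
    (∃ a : ℤ, x = a) ↔ ∃ a : ℤ, y = a :=
  ⟨fun ⟨a, ha⟩ => ⟨a - z, by push_cast; linarith⟩,
    fun ⟨a, ha⟩ => ⟨a + z, by push_cast; linarith⟩⟩

lemma Nat.choose_mul_choose_of_add_eq_one {m u v : ℕ} (h : u + v = 1) :
    m.choose u * m.choose v = m := by
  obtain ⟨rfl, rfl⟩ | ⟨rfl, rfl⟩ : u = 0 ∧ v = 1 ∨ u = 1 ∧ v = 0 := by omega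
  all_goals simp

open Polynomial in
lemma Polynomial.X_sub_C_mul_X_sub_C_pow_eq_sum {R : Type*} [CommRing R] (a b : R) (m : ℕ) :
    ((X - C a) * (X - C b)) ^ m = ∑ u ∈ range (m + 1), ∑ v ∈ range (m + 1),
      C ((-a) ^ (m - u) * (-b) ^ (m - v) * (m.choose u * m.choose v)) * X ^ (u + v) := by
  rw [mul_pow, sub_eq_add_neg, sub_eq_add_neg, ← C_neg, ← C_neg, add_pow, add_pow, sum_mul_sum]
  refine sum_congr rfl fun u _ => sum_congr rfl fun v _ => ?_
  simp only [map_mul, map_pow, map_natCast, pow_add]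
  ring

open MvPolynomial in
lemma MvPolynomial.monomial_single_add_single {R σ : Type*} [CommSemiring R] (i j : σ) (a b : ℕ)
    (c : R) : monomial (Finsupp.single i a + Finsupp.single j b) c = C c * X i ^ a * X j ^ b := by
  rw [X_pow_eq_monomial, X_pow_eq_monomial, C_mul_monomial, monomial_mul, mul_one, mul_one]

open MvPolynomial in
lemma MvPolynomial.forall_coeff_sum_monomial_iff {R σ ι : Type*} [CommSemiring R] {s : Finset ι}
    {e : ι → σ →₀ ℕ} (he : Set.InjOn e s) (c : ι → R) {P : R → Prop} (h0 : P 0) :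
    (∀ d, P ((∑ i ∈ s, monomial (e i) (c i)).coeff d)) ↔ ∀ i ∈ s, P (c i) := by
  classical
  have hcoeff : ∀ d, (∑ i ∈ s, monomial (e i) (c i)).coeff d =
      ∑ i ∈ s, if e i = d then c i else 0 := fun d => by simp only [coeff_sum, coeff_monomial]
  have hcoeff_e : ∀ i ∈ s, (∑ i ∈ s, monomial (e i) (c i)).coeff (e i) = c i :=
    fun i hi => by
      rw [hcoeff, sum_eq_single_of_mem i hi fun j hj hji => if_neg fun h => hji (he hj hi h),
        if_pos rfl]
  refine ⟨fun h i hi => hcoeff_e i hi ▸ h (e i), fun h d => ?_⟩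
  by_cases hd : ∃ i ∈ s, e i = d
  · obtain ⟨i, hi, rfl⟩ := hd
    exact (hcoeff_e i hi).symm ▸ h i hi
  · rwa [hcoeff, sum_eq_zero fun i hi => if_neg fun h => hd ⟨i, hi, h⟩]

noncomputable def bernoulliDiv (m : ℕ) : ℚ := bernoulli (2 * m) / (2 * m)

lemma bernoulliDiv_sub {n w : ℕ} (hw : w ≤ n) :
    bernoulliDiv (n - w) = bernoulli (2 * n - 2 * w) / (2 * n - 2 * w) := by
  rw [bernoulliDiv, Nat.mul_sub, Nat.cast_sub hw]
  ring

lemma two_dvd_den_bernoulli_two_mul {k : ℕ} (hk : k ≠ 0) : 2 ∣ (bernoulli (2 * k)).den := by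
  obtain ⟨z, hz⟩ := Bernoulli.vonStaudt_clausen k
  set P := (range (2 * k + 2)).filter fun p => p.Prime ∧ (p - 1) ∣ 2 * k
  have h2P : 2 ∈ P := mem_filter.2 ⟨mem_range.2 (by omega), Nat.prime_two, one_dvd _⟩
  rw [← add_sum_erase P _ h2P] at hz
  -- the only even prime contributes the `1 / 2`; the other terms are `2`-adically integral
  have h_half : Rat.padicValuation 2 (bernoulli (2 * k) + 1 / 2) ≤ 1 := by
    rw [show bernoulli (2 * k) + 1 / 2 = z - ∑ p ∈ P.erase 2, (1 : ℚ) / p by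
      push_cast at hz; linarith]
    refine (Valuation.map_sub _ _ _).trans (max_le ?_ ?_)
    · simp [Rat.padicValuation_le_one_iff]
    · refine Valuation.map_sum_le _ fun p hp => ?_
      obtain ⟨hp2, hp⟩ := mem_erase.1 hp
      have hprime : p.Prime := (mem_filter.1 hp).2.1
      rw [Rat.padicValuation_le_one_iff, one_div, Rat.inv_natCast_den_of_pos hprime.pos,
        ← even_iff_two_dvd, Nat.not_even_iff_odd]
      exact hprime.odd_of_ne_two hp2
  by_contra h
  have := (Valuation.map_sub _ (bernoulli (2 * k) + 1 / 2) (bernoulli (2 * k))).trans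
    (max_le h_half (Rat.padicValuation_le_one_iff.2 h))
  rw [add_sub_cancel_left, Rat.padicValuation_le_one_iff] at this
  exact this (by norm_num)

lemma odd_num_bernoulliDiv {k : ℕ} (hk : k ≠ 0) : Odd (bernoulliDiv k).num := by
  refine Rat.odd_num_of_two_dvd_den (not_not.1 fun h => ?_)
  refine Rat.padicValuation_le_one_iff.1 ?_ (two_dvd_den_bernoulli_two_mul hk)
  have h2k : (2 * k : ℚ).den = 1 := by exact_mod_cast Rat.den_natCast (2 * k)
  rw [← div_mul_cancel₀ (bernoulli (2 * k)) (by positivity : (2 * k : ℚ) ≠ 0), map_mul]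
  exact mul_le_one' (Rat.padicValuation_le_one_iff.2 h)
    (Rat.padicValuation_le_one_iff.2 (by simp [h2k]))

lemma beta_of_even {r : ℕ} (hr : Even r) (hr0 : r ≠ 0) : beta r = 0 := by
  rw [beta, bernoulli_eq_zero_of_odd hr.add_one (by omega), mul_zero, zero_div]

lemma beta_two_mul_sub_one {k : ℕ} (hk : k ≠ 0) : beta (2 * k - 1) = -bernoulliDiv k := by
  obtain ⟨j, rfl⟩ := Nat.exists_eq_add_one_of_ne_zero hk
  rw [beta, bernoulliDiv, show 2 * (j + 1) - 1 = 2 * j + 1 by omega,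
    show 2 * j + 1 + 1 = 2 * (j + 1) by ring, pow_succ, pow_mul, neg_one_sq, one_pow]
  push_cast
  ring

lemma xi_symm {n r : ℕ} (hr : r ≤ 2 * n - 2) : xi n (2 * n - 2 - r) = xi n r := by
  simp only [xi, Nat.sub_sub_self hr]
  split_ifs <;> first | (exfalso; omega) | ring

lemma xi_of_even {n r : ℕ} (hr : Even r) (hrn : r ≤ 2 * n - 2) : xi n r = 0 := by
  by_cases h : r = 0 ∨ r = 2 * n - 2
  · rw [xi, if_pos h]
  have hr2 := Nat.even_iff.1 hr
  rw [xi, if_neg h, beta_of_even hr (by omega),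
    beta_of_even (r := 2 * n - 2 - r) (Nat.even_iff.2 (by omega)) (by omega),
    if_neg (show r ≠ 1 by omega), if_neg (show 2 * n - 2 - r ≠ 1 by omega)]
  ring

lemma xi_two_mul_sub_one {n w : ℕ} (hw : w ≠ 0) (hwn : w + 1 < n) :
    xi n (2 * w - 1) = bernoulliDiv n * (bernoulliDiv w + bernoulliDiv (n - w))
      - bernoulliDiv w * bernoulliDiv (n - w)
      - bernoulliDiv n * (if w = 1 then 1 else 0) / (2 * n - 2) := by
  rw [xi, if_neg (by omega), show 2 * n - 2 - (2 * w - 1) = 2 * (n - w) - 1 by omega,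
    beta_two_mul_sub_one hw, beta_two_mul_sub_one (show n - w ≠ 0 by omega),
    beta_two_mul_sub_one (show n ≠ 0 by omega), if_neg (show 2 * (n - w) - 1 ≠ 1 by omega)]
  simp only [show 2 * w - 1 = 1 ↔ w = 1 by omega]
  ring

noncomputable def Gcoeff (n u v : ℕ) : ℚ :=
  jden n * xi n (u + v) * ((n - 1).choose u * (n - 1).choose v)

lemma Gcoeff_symm {n u v : ℕ} (hu : u < n) (hv : v < n) :
    Gcoeff n (n - 1 - u) (n - 1 - v) = Gcoeff n u v := by
  rw [Gcoeff, Gcoeff, Nat.choose_symm (by omega), Nat.choose_symm (by omega),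
    show n - 1 - u + (n - 1 - v) = 2 * n - 2 - (u + v) by omega, xi_symm (by omega)]

lemma Gcoeff_of_even {n u v : ℕ} (huv : Even (u + v)) (hu : u < n) (hv : v < n) :
    Gcoeff n u v = 0 := by
  rw [Gcoeff, xi_of_even huv (by omega), mul_zero, zero_mul]

lemma exists_int_eq_Gcoeff_iff {n u v w : ℕ} (hn : 3 ≤ n) (hw : 1 ≤ w) (hwn : 2 * w ≤ n)
    (huv : u + v = 2 * w - 1) :
    (∃ z : ℤ, Gcoeff n u v = z) ↔
      ∃ z : ℤ, (jden n : ℚ) * ((n - 1).choose u : ℚ) * ((n - 1).choose v : ℚ)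
          * (bernoulliDiv n * (bernoulliDiv w + bernoulliDiv (n - w))
            - bernoulliDiv w * bernoulliDiv (n - w))
        + (if w = 1 then 1 else 0) / 2 = z := by
  rw [Gcoeff, huv, xi_two_mul_sub_one (by omega) (by omega)]
  by_cases hw1 : w = 1
  · subst hw1
    -- `jden n * bernoulliDiv n` is the odd numerator `2t + 1`, so the correction is `t + 1/2`
    obtain ⟨t, ht⟩ := odd_num_bernoulliDiv (k := n) (by omega)
    have hj : (jden n : ℚ) * bernoulliDiv n = 2 * t + 1 := by
      rw [show jden n = (bernoulliDiv n).den from rfl, Rat.den_mul_eq_num, ht]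
      push_cast; ring
    have hC : ((n - 1).choose u * (n - 1).choose v : ℚ) / (2 * n - 2) = 1 / 2 := by
      rw [← Nat.cast_mul, Nat.choose_mul_choose_of_add_eq_one (by omega), Nat.cast_sub (by omega)]
      have : (3 : ℚ) ≤ n := by exact_mod_cast hn
      rw [div_eq_iff (by linarith)]
      ring
    refine exists_intCast_eq_iff_of_sub_eq (z := -(t + 1)) ?_
    rw [if_pos rfl]
    push_cast
    linear_combination (-(jden n * bernoulliDiv n : ℚ)) * hC - hj / 2
  · refine exists_intCast_eq_iff_of_sub_eq (z := 0) ?_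
    rw [if_neg hw1]
    push_cast
    ring

open MvPolynomial in
lemma Gpoly_eq_sum_monomial {n : ℕ} (hn : n ≠ 0) :
    Gpoly n = ∑ p ∈ range n ×ˢ range n,
      monomial (Finsupp.single 0 (n - 1 - p.1) + Finsupp.single 1 (n - 1 - p.2))
        ((-1) ^ (n - 1 - p.1 + (n - 1 - p.2)) * Gcoeff n p.1 p.2) := by
  obtain ⟨m, rfl⟩ := Nat.exists_eq_add_one_of_ne_zero hn
  simp only [Gpoly, Qpoly, Polynomial.X_sub_C_mul_X_sub_C_pow_eq_sum, Polynomial.finsetSum_coeff,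
    Polynomial.coeff_C_mul_X_pow, smul_sum, smul_ite, smul_zero, add_tsub_cancel_right]
  rw [sum_comm, sum_product]
  refine sum_congr rfl fun u hu => ?_
  rw [sum_comm]
  refine sum_congr rfl fun v hv => ?_
  rw [sum_ite_eq', if_pos (mem_range.2 (by simp only [mem_range] at hu hv; omega)),
    monomial_single_add_single, Gcoeff, add_tsub_cancel_right]
  simp only [smul_eq_C_mul, map_mul, map_pow, map_neg, map_one, map_natCast, pow_add]
  ring

lemma den_coeff_Gpoly_eq_one_iff {n : ℕ} (hn : n ≠ 0) :
    (∀ d, ((Gpoly n).coeff d).den = 1) ↔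
      ∀ u v, u < n → v < n → ∃ z : ℤ, Gcoeff n u v = z := by
  have hinj : Set.InjOn (fun p : ℕ × ℕ =>
      Finsupp.single (0 : Fin 2) (n - 1 - p.1) + Finsupp.single 1 (n - 1 - p.2))
      ↑(range n ×ˢ range n) := by
    rintro ⟨u, v⟩ huv ⟨u', v'⟩ huv' h
    simp only [coe_product, coe_range, Set.mem_prod, Set.mem_Iio] at huv huv'
    have h0 := congrArg (· 0) h
    have h1 := congrArg (· 1) h
    simp only [Finsupp.add_apply, Finsupp.single_eq_same, Finsupp.single_eq_of_ne zero_ne_one,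
      Finsupp.single_eq_of_ne one_ne_zero, add_zero, zero_add] at h0 h1
    rw [Prod.mk.injEq]
    omega
  rw [Gpoly_eq_sum_monomial hn]
  refine (MvPolynomial.forall_coeff_sum_monomial_iff hinj _ (P := fun x : ℚ => x.den = 1)
    rfl).trans ?_
  simp only [mem_product, mem_range, and_imp, Prod.forall, Rat.den_neg_one_pow_mul,
    Rat.den_eq_one_iff_exists_intCast]

/-- G_n ∈ ℤ[x₁,x₂] is equivalent to an explicit integrality condition on
Bernoulli number expressions. -/
theorem G_integer_iff (n : ℕ) (hn : 3 ≤ n) :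
    (∀ d : Fin 2 →₀ ℕ, ((Gpoly n).coeff d).den = 1)
      ↔ (∀ u v w : ℕ, 1 ≤ w → 2*w ≤ n → u + v = 2*w - 1 →
          ∃ z : ℤ,
            (jden n : ℚ) * ((n-1).choose u : ℚ) * ((n-1).choose v : ℚ)
                * ((bernoulli (2*n) / (2*n))
                      * (bernoulli (2*w) / (2*w) + bernoulli (2*n-2*w) / (2*n-2*w))
                    - (bernoulli (2*w) / (2*w)) * (bernoulli (2*n-2*w) / (2*n-2*w)))
              + (if w = 1 then 1 else 0) / 2 = (z : ℚ)) := by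
  rw [den_coeff_Gpoly_eq_one_iff (by omega)]
  constructor
  · intro h u v w hw hwn huv
    rw [← bernoulliDiv_sub (by omega)]
    exact (exists_int_eq_Gcoeff_iff hn hw hwn huv).1 (h u v (by omega) (by omega))
  · intro h
    have hlow : ∀ u v w, 1 ≤ w → 2 * w ≤ n → u + v = 2 * w - 1 →
        ∃ z : ℤ, Gcoeff n u v = z :=
      fun u v w hw hwn huv => (exists_int_eq_Gcoeff_iff hn hw hwn huv).2 <| by
        rw [bernoulliDiv_sub (by omega)]
        exact h u v w hw hwn huv
    intro u v hu hv
    obtain ⟨k, hk | hk⟩ := Nat.even_or_odd' (u + v)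
    · exact ⟨0, by rw [Gcoeff_of_even ⟨k, by omega⟩ hu hv, Int.cast_zero]⟩
    by_cases hkn : 2 * (k + 1) ≤ n
    · exact hlow u v (k + 1) (by omega) hkn (by omega)
    · rw [← Gcoeff_symm hu hv]
      exact hlow (n - 1 - u) (n - 1 - v) (n - 1 - k) (by omega) (by omega) (by omega)
end
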